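/- arXiv:1809.07423 — 10 statements merged into one kernel-verified Lean document; each statement's English description precedes it below -/
import Mathlib

section
/- Let R be a principal ideal domain and n ≥ 1. Let α ∈ M_n(R) be a matrix whose determinant factors as det α = a₁a₂ with a₁, a₂ ∈ R satisfying Ra₁ + Ra₂ = R. Then there exist matrices ω₁, ω₂ ∈ M_n(R) such that α = ω₁ω₂, R·(det ω₁) = Ra₁, and R·(det ω₂) = Ra₂. -/
/-!
Over a principal ideal domain a matrix `α` with `det α ≠ 0` has a Smith normal form
`α = P * diagonal d * Q` with `P`, `Q` invertible, so `a₁ * a₂` is associated to `∏ i, d i`.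
Peeling the factors `d i` off one at a time, each splits as `d i = b i * c i` with
`∏ b ~ a₁` and `∏ c ~ a₂`; then `ω₁ = P * diagonal b` and `ω₂ = diagonal c * Q`.
If `det α = 0`, one of the coprime `a₁`, `a₂` is zero, the other is a unit, and `α = α * 1`
or `α = 1 * α` already works.
-/

open Matrix

theorem Finset.exists_associated_prod_of_associated_mul_prod {M : Type*}
    [CommMonoidWithZero M] [IsCancelMulZero M] [DecompositionMonoid M]
    {ι : Type*} [DecidableEq ι] (d : ι → M) (s : Finset ι) :
    ∀ {a₁ a₂ : M}, a₁ * a₂ ≠ 0 → Associated (a₁ * a₂) (∏ i ∈ s, d i) →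
      ∃ b c : ι → M, (∀ i, d i = b i * c i) ∧
        Associated a₁ (∏ i ∈ s, b i) ∧ Associated a₂ (∏ i ∈ s, c i) := by
  induction s using Finset.induction_on with
  | empty =>
    intro a₁ a₂ _ h
    rw [Finset.prod_empty, associated_one_iff_isUnit, IsUnit.mul_iff] at h
    exact ⟨d, 1, fun i => (mul_one _).symm, by simpa using h.1, by simpa using h.2⟩
  | insert j s hj ih =>
    intro a₁ a₂ h0 h
    rw [Finset.prod_insert hj] at h
    obtain ⟨b₀, c₀, ⟨a₁', rfl⟩, ⟨a₂', rfl⟩, hd⟩ :=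
      exists_dvd_and_dvd_of_dvd_mul (dvd_mul_right (d j) _ |>.trans h.symm.dvd)
    have hbc₀ : b₀ * c₀ ≠ 0 := by
      rintro hzero
      exact h0 (by rw [mul_mul_mul_comm, hzero, zero_mul])
    have h' : Associated (a₁' * a₂') (∏ i ∈ s, d i) := by
      refine Associated.of_mul_left ?_ (Associated.refl (b₀ * c₀)) hbc₀
      rwa [mul_mul_mul_comm, ← hd]
    obtain ⟨b, c, hbc, hb, hc⟩ :=
      ih (right_ne_zero_of_mul (by rwa [mul_mul_mul_comm] at h0)) h'
    refine ⟨Function.update b j b₀, Function.update c j c₀, fun i => ?_, ?_, ?_⟩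
    · rcases eq_or_ne i j with rfl | hij
      · simpa using hd
      · simpa [hij] using hbc i
    · rw [Finset.prod_insert hj, Finset.prod_update_of_notMem hj, Function.update_self]
      exact hb.mul_left b₀
    · rw [Finset.prod_insert hj, Finset.prod_update_of_notMem hj, Function.update_self]
      exact hc.mul_left c₀

namespace Matrix

variable {R : Type*} [CommRing R] [IsDomain R] [IsPrincipalIdealRing R]
  {ι : Type*} [Fintype ι] [DecidableEq ι]

theorem exists_eq_mul_diagonal_mul_of_det_ne_zero (A : Matrix ι ι R) (hA : A.det ≠ 0) :
    ∃ (P Q : Matrix ι ι R) (d : ι → R), IsUnit P.det ∧ IsUnit Q.det ∧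
      A = P * diagonal d * Q := by
  let e := LinearEquiv.ofInjective A.mulVecLin (mulVec_injective_of_det_ne_zero hA)
  have hrank : Module.finrank R (LinearMap.range A.mulVecLin) = Module.finrank R (ι → R) := by
    rw [← rank, rank_of_det_ne_zero hA, Module.finrank_fintype_fun_eq_card]
  let std := Pi.basisFun R ι
  obtain ⟨b, d, bN, hbN⟩ := Submodule.exists_smith_normal_form_of_rank_eq std hrank
  let B := bN.map e.symm
  have hB : A * std.toMatrix B = std.toMatrix b * diagonal d := by
    ext i j
    have hcol : A *ᵥ B j = d j • b j := by
      rw [← hbN j, ← e.apply_symm_apply (bN j)]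
      rfl
    rw [mul_diagonal]
    simpa [Matrix.mul_apply, mulVec, dotProduct, Module.Basis.toMatrix_apply, std,
      mul_comm (b j i)] using congrFun hcol i
  let := std.invertibleToMatrix B
  let := std.invertibleToMatrix b
  refine ⟨std.toMatrix b, B.toMatrix std, d, isUnit_det_of_invertible _, ?_, ?_⟩
  · exact isUnit_det_of_invertible (⅟ (std.toMatrix B))
  · rw [← hB, Matrix.mul_assoc, std.toMatrix_mul_toMatrix_flip, Matrix.mul_one]

theorem exists_eq_mul_of_associated_det_mul (A : Matrix ι ι R) {a₁ a₂ : R} (hA0 : A.det ≠ 0)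
    (hA : Associated A.det (a₁ * a₂)) :
    ∃ ω₁ ω₂ : Matrix ι ι R, A = ω₁ * ω₂ ∧ Associated ω₁.det a₁ ∧ Associated ω₂.det a₂ := by
  obtain ⟨P, Q, d, hP, hQ, rfl⟩ := exists_eq_mul_diagonal_mul_of_det_ne_zero A hA0
  have hd : Associated (a₁ * a₂) (∏ i, d i) := by
    rw [det_mul, det_mul, det_diagonal] at hA
    exact hA.symm.trans
      ((associated_mul_unit_left _ _ hQ).trans (associated_unit_mul_left _ _ hP))
  obtain ⟨b, c, hbc, hb, hc⟩ :=
    Finset.univ.exists_associated_prod_of_associated_mul_prod d (hA.ne_zero_iff.mp hA0) hd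
  have hdbc : diagonal d = diagonal b * diagonal c := by
    rw [diagonal_mul_diagonal]
    exact congrArg diagonal (funext hbc)
  refine ⟨P * diagonal b, diagonal c * Q, ?_, ?_, ?_⟩
  · rw [hdbc, Matrix.mul_assoc P, Matrix.mul_assoc, Matrix.mul_assoc]
  · rw [det_mul, det_diagonal]
    exact (associated_unit_mul_left _ _ hP).trans hb.symm
  · rw [det_mul, det_diagonal]
    exact (associated_mul_unit_left _ _ hQ).trans hc.symm

end Matrix

theorem matrix_factorization_of_coprime_det_general
    {R : Type*} [CommRing R] [IsDomain R] [IsPrincipalIdealRing R]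
    {n : ℕ} (α : Matrix (Fin n) (Fin n) R) (a₁ a₂ : R)
    (hdet : α.det = a₁ * a₂)
    (hcoprime : Ideal.span {a₁} ⊔ Ideal.span {a₂} = (⊤ : Ideal R)) :
    ∃ ω₁ ω₂ : Matrix (Fin n) (Fin n) R, α = ω₁ * ω₂ ∧
      Ideal.span {ω₁.det} = Ideal.span {a₁} ∧ Ideal.span {ω₂.det} = Ideal.span {a₂} := by
  simp only [Ideal.span_singleton_eq_span_singleton]
  by_cases h0 : α.det = 0
  · have hco : IsCoprime a₁ a₂ := by
      rwa [← Ideal.isCoprime_span_singleton_iff, Ideal.isCoprime_iff_sup_eq]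
    rcases mul_eq_zero.mp (hdet ▸ h0) with rfl | rfl
    · have hu : IsUnit a₂ := isCoprime_zero_left.mp hco
      refine ⟨α, 1, (Matrix.mul_one α).symm, ?_, ?_⟩
      · rw [hdet]; exact associated_mul_unit_left _ _ hu
      · rw [det_one]; exact (associated_one_iff_isUnit.mpr hu).symm
    · have hu : IsUnit a₁ := isCoprime_zero_right.mp hco
      refine ⟨1, α, (Matrix.one_mul α).symm, ?_, ?_⟩
      · rw [det_one]; exact (associated_one_iff_isUnit.mpr hu).symm
      · rw [hdet]; exact associated_unit_mul_left _ _ hu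
  · exact α.exists_eq_mul_of_associated_det_mul h0 (hdet ▸ Associated.refl _)

/-- Let `R` be a principal ideal domain and `n ≥ 1`. Let `α ∈ Mₙ(R)` be a
matrix whose determinant factors as `det α = a₁ * a₂` with `R a₁ + R a₂ = R`. Then there exist
matrices `ω₁, ω₂ ∈ Mₙ(R)` with `α = ω₁ * ω₂`, `R (det ω₁) = R a₁` and `R (det ω₂) = R a₂`. -/
theorem matrix_factorization_of_coprime_det
    {R : Type*} [CommRing R] [IsDomain R] [IsPrincipalIdealRing R]
    {n : ℕ} (hn : 1 ≤ n) (α : Matrix (Fin n) (Fin n) R) (a₁ a₂ : R)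
    (hdet : α.det = a₁ * a₂)
    (hcoprime : Ideal.span {a₁} ⊔ Ideal.span {a₂} = (⊤ : Ideal R)) :
    ∃ ω₁ ω₂ : Matrix (Fin n) (Fin n) R, α = ω₁ * ω₂ ∧
      Ideal.span {ω₁.det} = Ideal.span {a₁} ∧ Ideal.span {ω₂.det} = Ideal.span {a₂} :=
  matrix_factorization_of_coprime_det_general α a₁ a₂ hdet hcoprime
end

section
/- Let R be a principal ideal domain, n ≥ 1, and p ∈ R a prime element. Let α ∈ M_n(R) be such that p² does not divide det α. If α = ω₁ω₂ = ω₁′ω₂′ with ω₁, ω₂, ω₁′, ω₂′ ∈ M_n(R) and R·(det ω₂) = R·(det ω₂′) = Rp, then there exists U ∈ GL_n(R) with ω₂ = U ω₂′; that is, the right factor of determinant p is unique up to left multiplication by units of M_n(R). -/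
/-!
Compare `ω₂` with `ω₂'` through `ω₂ * adj ω₂'`. Multiplying `ω₁ * ω₂ = ω₁' * ω₂'` by `adj ω₁` on the
left and by `adj ω₂'` on the right gives `det ω₁ • (ω₂ * adj ω₂') = det ω₂' • (adj ω₁ * ω₁')`. Since
`p² ∤ det α`, the prime `p ~ det ω₂` does not divide `det ω₁`, so every entry of `ω₂ * adj ω₂'` is
divisible by `det ω₂'`: `ω₂ * adj ω₂' = det ω₂' • U`. Cancelling `det ω₂'` gives `U * ω₂' = ω₂`,
and `det U` is a unit because `det ω₂` and `det ω₂'` are associated.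
-/

namespace Matrix

variable {n R : Type*} [CommRing R]

theorem exists_eq_smul_of_smul_eq_prime_smul [IsDomain R] {a d : R} (hd : Prime d)
    (hda : ¬ d ∣ a) {X Y : Matrix n n R} (h : a • X = d • Y) : ∃ U : Matrix n n R, X = d • U := by
  have hdvd (i j : n) : d ∣ X i j := by
    refine (hd.dvd_or_dvd ⟨Y i j, ?_⟩).resolve_left hda
    simpa using congr_fun₂ h i j
  choose U hU using hdvd
  exact ⟨of U, ext fun i j => hU i j⟩

variable [Fintype n] [DecidableEq n]

theorem det_smul_mul_adjugate_eq_of_mul_eq {A B A' B' : Matrix n n R} (h : A * B = A' * B') :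
    A.det • (B * B'.adjugate) = B'.det • (A.adjugate * A') := by
  calc A.det • (B * B'.adjugate) = A.adjugate * (A * B) * B'.adjugate := by
        rw [← Matrix.mul_assoc, adjugate_mul, smul_mul, Matrix.one_mul, smul_mul]
    _ = A.adjugate * A' * (B' * B'.adjugate) := by rw [h, Matrix.mul_assoc, Matrix.mul_assoc,
        Matrix.mul_assoc]
    _ = B'.det • (A.adjugate * A') := by rw [mul_adjugate, mul_smul_comm, Matrix.mul_one]

theorem mul_eq_of_mul_adjugate_eq_det_smul [IsDomain R] {B B' U : Matrix n n R}
    (hB' : B'.det ≠ 0) (h : B * B'.adjugate = B'.det • U) : U * B' = B :=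
  smul_right_injective _ hB' <| by
    calc B'.det • (U * B') = B * (B'.adjugate * B') := by rw [← smul_mul, ← h, Matrix.mul_assoc]
      _ = B'.det • B := by rw [adjugate_mul, mul_smul_comm, Matrix.mul_one]

theorem isUnit_of_mul_eq_of_associated_det [IsDomain R] {B B' U : Matrix n n R}
    (hB' : B'.det ≠ 0) (hdet : Associated B.det B'.det) (h : U * B' = B) : IsUnit U := by
  rw [isUnit_iff_isUnit_det, ← associated_one_iff_isUnit]
  refine Associated.of_mul_left (b := U.det) (d := 1) ?_ (Associated.refl _) hB'
  rwa [mul_one, mul_comm, ← det_mul, h]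

end Matrix

theorem matrix_prime_right_factor_unique_general
    {R : Type*} [CommRing R] [IsDomain R]
    {n : ℕ} (p : R) (hp : Prime p)
    (α ω₁ ω₂ ω₁' ω₂' : Matrix (Fin n) (Fin n) R)
    (hα : ¬ p ^ 2 ∣ α.det)
    (h₁ : α = ω₁ * ω₂) (h₂ : α = ω₁' * ω₂')
    (hω₂ : Ideal.span {ω₂.det} = Ideal.span {p})
    (hω₂' : Ideal.span {ω₂'.det} = Ideal.span {p}) :
    ∃ U : Matrix.GeneralLinearGroup (Fin n) R, ω₂ = (U : Matrix (Fin n) (Fin n) R) * ω₂' := by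
  have hω₂p : Associated ω₂.det p := Ideal.span_singleton_eq_span_singleton.mp hω₂
  have hω₂'p : Associated ω₂'.det p := Ideal.span_singleton_eq_span_singleton.mp hω₂'
  have hprime : Prime ω₂'.det := hω₂'p.symm.prime hp
  have hω₁ : ¬ ω₂'.det ∣ ω₁.det := fun hdvd => hα <| by
    rw [h₁, Matrix.det_mul, pow_two]
    exact mul_dvd_mul (hω₂'p.symm.dvd.trans hdvd) hω₂p.symm.dvd
  obtain ⟨U, hU⟩ := Matrix.exists_eq_smul_of_smul_eq_prime_smul hprime hω₁
    (Matrix.det_smul_mul_adjugate_eq_of_mul_eq (h₁.symm.trans h₂))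
  have hUω₂' := Matrix.mul_eq_of_mul_adjugate_eq_det_smul hprime.ne_zero hU
  obtain ⟨V, rfl⟩ := Matrix.isUnit_of_mul_eq_of_associated_det hprime.ne_zero
    (hω₂p.trans hω₂'p.symm) hUω₂'
  exact ⟨V, hUω₂'.symm⟩

/-- Let `R` be a principal ideal domain, `n ≥ 1`, and `p ∈ R` a prime element.
Let `α ∈ Mₙ(R)` be such that `p²` does not divide `det α`. If `α = ω₁ω₂ = ω₁′ω₂′` with all
factors in `Mₙ(R)` and `R (det ω₂) = R (det ω₂′) = R p`, then there is `U ∈ GLₙ(R)` with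
`ω₂ = U ω₂′`: the right factor of determinant `p` is unique up to left multiplication by units
of `Mₙ(R)`. -/
theorem matrix_prime_right_factor_unique
    {R : Type*} [CommRing R] [IsDomain R] [IsPrincipalIdealRing R]
    {n : ℕ} (hn : 1 ≤ n) (p : R) (hp : Prime p)
    (α ω₁ ω₂ ω₁' ω₂' : Matrix (Fin n) (Fin n) R)
    (hα : ¬ p ^ 2 ∣ α.det)
    (h₁ : α = ω₁ * ω₂) (h₂ : α = ω₁' * ω₂')
    (hω₂ : Ideal.span {ω₂.det} = Ideal.span {p})
    (hω₂' : Ideal.span {ω₂'.det} = Ideal.span {p}) :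
    ∃ U : Matrix.GeneralLinearGroup (Fin n) R, ω₂ = (U : Matrix (Fin n) (Fin n) R) * ω₂' :=
  matrix_prime_right_factor_unique_general p hp α ω₁ ω₂ ω₁' ω₂' hα h₁ h₂ hω₂ hω₂'
end

section
/- Let R be a principal ideal domain, n ≥ 1, and p ∈ R a prime element. Let π, ω ∈ M_n(R) with R·(det π) = Rp and p not dividing det ω. Then there exist ω′, π′ ∈ M_n(R) with πω = ω′π′ and R·(det π′) = Rp; moreover π′ is unique up to left multiplication by units: if πω = ω″π″ with R·(det π″) = Rp, then π″ = Uπ′ for some U ∈ GL_n(R). -/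
/-!
Modulo `p` the matrix `π ω` is singular, so it has a kernel vector `w` over the field `R/(p)`,
which we lift to `R` with one coordinate equal to `1`. Putting `w` into the corresponding column
of the identity gives a unimodular `E` such that that column of `π ω E` is divisible by `p`; hence
`π ω E = ω' D` with `D = diag(1, …, p, …, 1)`, and `π' = D E⁻¹` works.

For uniqueness, if `ω' π' = ω'' π''` then `det ω''` is associated to `det ω`, so it is coprime
to `p = det π'`. A Bézout relation `a p + b det ω'' = 1` gives
`π'' = (a π'' adj π' + b adj ω'' ω') π'`, and the determinant of the left factor is a unit.
-/

namespace Matrix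

variable {ι : Type*} [Fintype ι] [DecidableEq ι]

theorem exists_apply_eq_one_and_mulVec_eq_zero {K : Type*} [Field K] (M : Matrix ι ι K)
    (h : M.det = 0) : ∃ i v, v i = 1 ∧ M *ᵥ v = 0 := by
  obtain ⟨v, hv0, hv⟩ := exists_mulVec_eq_zero_iff.mpr h
  obtain ⟨i, hi⟩ := Function.ne_iff.mp hv0
  refine ⟨i, (v i)⁻¹ • v, inv_mul_cancel₀ hi, ?_⟩
  rw [mulVec_smul, hv, smul_zero]

variable {R : Type*} [CommRing R]

theorem exists_apply_eq_one_and_dvd_mulVec_of_dvd_det {p : R} (hp : (Ideal.span {p}).IsMaximal)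
    (A : Matrix ι ι R) (h : p ∣ A.det) : ∃ i w, w i = 1 ∧ ∀ k, p ∣ (A *ᵥ w) k := by
  let := Ideal.Quotient.field (Ideal.span {p})
  set f := Ideal.Quotient.mk (Ideal.span {p})
  have hdet : (A.map f).det = 0 := by
    rw [← RingHom.mapMatrix_apply, ← RingHom.map_det, Ideal.Quotient.eq_zero_iff_dvd]
    exact h
  obtain ⟨i, v, hvi, hv⟩ := exists_apply_eq_one_and_mulVec_eq_zero _ hdet
  obtain ⟨w, hw⟩ := Ideal.Quotient.mk_surjective.comp_left v
  have hlift : f ∘ Function.update w i 1 = v := by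
    ext k
    rcases eq_or_ne k i with rfl | hk
    · simp [hvi]
    · simp [f, hk, ← hw]
  refine ⟨i, Function.update w i 1, by simp, fun k => ?_⟩
  rw [← Ideal.Quotient.eq_zero_iff_dvd, RingHom.map_mulVec, hlift, hv, Pi.zero_apply]

theorem det_one_updateCol (i : ι) (w : ι → R) :
    ((1 : Matrix ι ι R).updateCol i w).det = w i := by
  rw [← cramer_apply, cramer_one, Module.End.one_apply]

theorem exists_eq_mul_diagonal_update_of_dvd {p : R} (B : Matrix ι ι R) (j : ι)
    (h : ∀ i, p ∣ B i j) : ∃ C, B = C * diagonal (Function.update 1 j p) := by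
  choose c hc using h
  refine ⟨B.updateCol j c, ?_⟩
  ext i l
  rcases eq_or_ne l j with rfl | hl
  · simp [mul_diagonal, hc i, mul_comm]
  · simp [mul_diagonal, hl]

theorem exists_eq_mul_of_dvd_det {p : R} (hp : (Ideal.span {p}).IsMaximal)
    (A : Matrix ι ι R) (h : p ∣ A.det) : ∃ ω π, A = ω * π ∧ π.det = p := by
  obtain ⟨i, w, hwi, hw⟩ := exists_apply_eq_one_and_dvd_mulVec_of_dvd_det hp A h
  set E := (1 : Matrix ι ι R).updateCol i w
  have hE : E.det = 1 := by rw [det_one_updateCol, hwi]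
  obtain ⟨C, hC⟩ := exists_eq_mul_diagonal_update_of_dvd (A * E) i fun k => by
    simpa [E, mul_apply, updateCol_apply, one_apply, mulVec, dotProduct] using hw k
  refine ⟨C, diagonal (Function.update 1 i p) * E⁻¹, ?_, ?_⟩
  · rw [← Matrix.mul_assoc, ← hC, Matrix.mul_assoc, mul_nonsing_inv _ (by simp [hE]),
      Matrix.mul_one]
  · simp [det_diagonal, hE, Finset.prod_update_of_mem]

theorem exists_eq_unit_mul_of_mul_eq_mul [IsDomain R] {ω π ω' π' : Matrix ι ι R}
    (h : ω * π = ω' * π') (hcop : IsCoprime π.det ω'.det) (hπ : π.det ≠ 0)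
    (hassoc : Associated π.det π'.det) : ∃ U : GL ι R, π' = U * π := by
  obtain ⟨a, b, hab⟩ := hcop
  set M := a • (π' * π.adjugate) + b • (ω'.adjugate * ω)
  have hM : M * π = π' := by
    rw [Matrix.add_mul, smul_mul, smul_mul, Matrix.mul_assoc, adjugate_mul, Matrix.mul_assoc, h,
      ← Matrix.mul_assoc, adjugate_mul, Matrix.mul_smul, Matrix.mul_one, smul_mul,
      Matrix.one_mul, smul_smul, smul_smul, ← add_smul, hab, one_smul]
  obtain ⟨u, hu⟩ := hassoc
  have hMdet : M.det = u := by
    apply mul_left_cancel₀ hπ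
    rw [mul_comm, ← det_mul, hM, hu]
  exact ⟨nonsingInvUnit M (hMdet ▸ u.isUnit), hM.symm⟩

end Matrix

open Matrix

theorem matrix_metacommutation_general
    {R : Type*} [CommRing R] [IsDomain R] [IsPrincipalIdealRing R]
    {n : ℕ} (p : R) (hp : Prime p)
    (π ω : Matrix (Fin n) (Fin n) R)
    (hπ : Ideal.span {π.det} = Ideal.span {p})
    (hω : ¬ p ∣ ω.det) :
    ∃ ω' π' : Matrix (Fin n) (Fin n) R, π * ω = ω' * π' ∧
      Ideal.span {π'.det} = Ideal.span {p} ∧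
      ∀ ω'' π'' : Matrix (Fin n) (Fin n) R, π * ω = ω'' * π'' →
        Ideal.span {π''.det} = Ideal.span {p} →
        ∃ U : Matrix.GeneralLinearGroup (Fin n) R,
          π'' = (U : Matrix (Fin n) (Fin n) R) * π' := by
  rw [Ideal.span_singleton_eq_span_singleton] at hπ
  have hdvd : p ∣ (π * ω).det := by
    rw [det_mul]
    exact hπ.symm.dvd.mul_right _
  obtain ⟨ω', π', hfact, hπ'⟩ := exists_eq_mul_of_dvd_det
    (PrincipalIdealRing.isMaximal_of_irreducible hp.irreducible) _ hdvd
  refine ⟨ω', π', hfact, by rw [hπ'], fun ω'' π'' h'' hπ'' => ?_⟩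
  rw [Ideal.span_singleton_eq_span_singleton] at hπ''
  have hω'' : Associated ω''.det ω.det := by
    have hdet : ω''.det * π''.det = ω.det * π.det := by
      rw [← det_mul, ← h'', det_mul, mul_comm]
    exact (Associated.of_eq hdet).of_mul_right (hπ''.trans hπ.symm)
      (hπ''.ne_zero_iff.2 hp.ne_zero)
  refine exists_eq_unit_mul_of_mul_eq_mul (hfact.symm.trans h'') ?_ (hπ' ▸ hp.ne_zero)
    (hπ' ▸ hπ''.symm)
  rw [hπ', hp.coprime_iff_not_dvd, hω''.dvd_iff_dvd_right]
  exact hω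

/-- **metacommutation for matrices over a PID.** Let `R` be a principal ideal
domain, `n ≥ 1`, and `p ∈ R` a prime element. Let `π, ω ∈ Mₙ(R)` with `R (det π) = R p` and
`p ∤ det ω`. Then there exist `ω′, π′ ∈ Mₙ(R)` with `π ω = ω′ π′` and `R (det π′) = R p`;
moreover `π′` is unique up to left multiplication by units: if `π ω = ω″ π″` with
`R (det π″) = R p`, then `π″ = U π′` for some `U ∈ GLₙ(R)`. -/
theorem matrix_metacommutation
    {R : Type*} [CommRing R] [IsDomain R] [IsPrincipalIdealRing R]
    {n : ℕ} (hn : 1 ≤ n) (p : R) (hp : Prime p)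
    (π ω : Matrix (Fin n) (Fin n) R)
    (hπ : Ideal.span {π.det} = Ideal.span {p})
    (hω : ¬ p ∣ ω.det) :
    ∃ ω' π' : Matrix (Fin n) (Fin n) R, π * ω = ω' * π' ∧
      Ideal.span {π'.det} = Ideal.span {p} ∧
      ∀ ω'' π'' : Matrix (Fin n) (Fin n) R, π * ω = ω'' * π'' →
        Ideal.span {π''.det} = Ideal.span {p} →
        ∃ U : Matrix.GeneralLinearGroup (Fin n) R,
          π'' = (U : Matrix (Fin n) (Fin n) R) * π' :=
  matrix_metacommutation_general p hp π ω hπ hω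
end

section
/- Let R be a commutative ring, 𝔭 ⊆ R a maximal ideal, and O an R-algebra. Let ω ∈ O be such that there exist b ∈ R ∖ 𝔭 and β ∈ O with ωβ = βω = b·1_O. Then the map sending a left ideal P of O to the left ideal of O generated by {xω : x ∈ P} together with 𝔭O is a bijection from the set of left ideals of O containing 𝔭O to itself. -/
/-!
Write `σ_u P` for the left ideal generated by `P u` and a two-sided ideal `I`. Since right
multiplication by `u` is left `O`-linear, `σ_v (σ_u P) = P (u v) + I v + I = P (u v) + I`, and
`P (u v) + I = P + I = P` as soon as `u v ≡ 1 mod I` and `I ≤ P`. With `I = 𝔭O`, the element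
`ω` has such a two-sided inverse `c β`, where `c b ≡ 1 mod 𝔭`, so `σ_ω` and `σ_{cβ}` are mutually
inverse on the left ideals containing `𝔭O`.
-/

namespace Ideal

instance isTwoSided_map_algebraMap {R O : Type*} [CommSemiring R] [Semiring O] [Algebra R O]
    (I : Ideal R) : (I.map (algebraMap R O)).IsTwoSided where
  mul_mem_of_left b ha := by
    refine (Submodule.span_le.2 ?_ :
      I.map (algebraMap R O) ≤
        Submodule.comap (LinearMap.toSpanSingleton O O b) (I.map (algebraMap R O))) ha
    rintro _ ⟨r, hr, rfl⟩
    simpa only [SetLike.mem_coe, Submodule.mem_comap, LinearMap.toSpanSingleton_apply,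
      smul_eq_mul, Algebra.commutes] using mul_mem_left _ b (mem_map_of_mem _ hr)

variable {O : Type*} [Ring O] (I : Ideal O)

def mulRightSup (u : O) (P : Ideal O) : Ideal O :=
  Submodule.span O ((fun x => x * u) '' (P : Set O) ∪ (I : Set O))

theorem mulRightSup_eq (u : O) (P : Ideal O) :
    I.mulRightSup u P = Submodule.map (LinearMap.toSpanSingleton O O u) P ⊔ I := by
  rw [mulRightSup, Submodule.span_union, Submodule.span_eq I]
  congr 1
  exact (Submodule.span_image (LinearMap.toSpanSingleton O O u)).trans
    (congrArg _ (Submodule.span_eq P))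

theorem le_mulRightSup (u : O) (P : Ideal O) : I ≤ I.mulRightSup u P :=
  (I.mulRightSup_eq u P).symm ▸ le_sup_right

theorem map_toSpanSingleton_sup_le_of_sub_mem {w w' : O} (h : w - w' ∈ I) (P : Ideal O) :
    Submodule.map (LinearMap.toSpanSingleton O O w) P ⊔ I ≤
      Submodule.map (LinearMap.toSpanSingleton O O w') P ⊔ I := by
  refine sup_le (Submodule.map_le_iff_le_comap.2 fun x hx => ?_) le_sup_right
  have hx' : x * w = x * w' + x * (w - w') := by rw [mul_sub, add_sub_cancel]
  rw [Submodule.mem_comap, LinearMap.toSpanSingleton_apply, smul_eq_mul, hx']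
  exact add_mem (Submodule.mem_sup_left (Submodule.mem_map_of_mem hx))
    (Submodule.mem_sup_right (I.mul_mem_left x h))

theorem map_toSpanSingleton_sup_eq_of_sub_mem {w w' : O} (h : w - w' ∈ I) (P : Ideal O) :
    Submodule.map (LinearMap.toSpanSingleton O O w) P ⊔ I =
      Submodule.map (LinearMap.toSpanSingleton O O w') P ⊔ I :=
  le_antisymm (I.map_toSpanSingleton_sup_le_of_sub_mem h P)
    (I.map_toSpanSingleton_sup_le_of_sub_mem (sub_mem_comm_iff.1 h) P)

theorem mulRightSup_mulRightSup [I.IsTwoSided] {u v : O} (h : u * v - 1 ∈ I) {P : Ideal O}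
    (hP : I ≤ P) : I.mulRightSup v (I.mulRightSup u P) = P := by
  have hIv : Submodule.map (LinearMap.toSpanSingleton O O v) I ≤ I :=
    Submodule.map_le_iff_le_comap.2 fun x hx => I.mul_mem_right v hx
  have hcomp : LinearMap.toSpanSingleton O O v ∘ₗ LinearMap.toSpanSingleton O O u =
      LinearMap.toSpanSingleton O O (u * v) :=
    LinearMap.ext fun x => mul_assoc x u v
  have hone : LinearMap.toSpanSingleton O O (1 : O) = LinearMap.id :=
    LinearMap.ext mul_one
  calc I.mulRightSup v (I.mulRightSup u P)
      = Submodule.map (LinearMap.toSpanSingleton O O v)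
          (Submodule.map (LinearMap.toSpanSingleton O O u) P) ⊔
        (Submodule.map (LinearMap.toSpanSingleton O O v) I ⊔ I) := by
        rw [mulRightSup_eq, mulRightSup_eq, Submodule.map_sup, sup_assoc]
    _ = Submodule.map (LinearMap.toSpanSingleton O O (u * v)) P ⊔ I := by
        rw [sup_eq_right.2 hIv, ← Submodule.map_comp, hcomp]
    _ = Submodule.map (LinearMap.toSpanSingleton O O 1) P ⊔ I :=
        I.map_toSpanSingleton_sup_eq_of_sub_mem h P
    _ = P := by rw [hone, Submodule.map_id, sup_eq_left.2 hP]

theorem bijOn_mulRightSup [I.IsTwoSided] {u v : O} (huv : u * v - 1 ∈ I) (hvu : v * u - 1 ∈ I) :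
    Set.BijOn (I.mulRightSup u) {P | I ≤ P} {P | I ≤ P} :=
  Set.InvOn.bijOn
    ⟨fun _ hP => I.mulRightSup_mulRightSup huv hP, fun _ hP => I.mulRightSup_mulRightSup hvu hP⟩
    (fun P _ => I.le_mulRightSup u P) (fun P _ => I.le_mulRightSup v P)

end Ideal

/-- Let `R` be a commutative ring, `𝔭 ⊆ R` a maximal ideal, and `O` an
`R`-algebra. Let `ω ∈ O` be such that there exist `b ∈ R ∖ 𝔭` and `β ∈ O` with
`ω β = β ω = b • 1`. Then the map sending a left ideal `P` of `O` to the left ideal of `O`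
generated by `{x ω : x ∈ P}` together with `𝔭 O` is a bijection from the set of left ideals
of `O` containing `𝔭 O` to itself. -/
theorem sigma_bijOn_ideals_containing_pO
    {R O : Type*} [CommRing R] [Ring O] [Algebra R O]
    (𝔭 : Ideal R) (h𝔭 : 𝔭.IsMaximal) (ω : O)
    (hω : ∃ b : R, b ∉ 𝔭 ∧ ∃ β : O,
      ω * β = algebraMap R O b ∧ β * ω = algebraMap R O b) :
    Set.BijOn
      (fun P : Ideal O =>
        (Submodule.span O ((fun x => x * ω) '' (P : Set O) ∪
          ((Ideal.map (algebraMap R O) 𝔭 : Ideal O) : Set O)) : Ideal O))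
      {P : Ideal O | Ideal.map (algebraMap R O) 𝔭 ≤ P}
      {P : Ideal O | Ideal.map (algebraMap R O) 𝔭 ≤ P} := by
  obtain ⟨b, hb, β, hωβ, hβω⟩ := hω
  obtain ⟨c, i, hi, hcb⟩ := h𝔭.exists_inv hb
  have hcb_sub : algebraMap R O (c * b) - 1 ∈ 𝔭.map (algebraMap R O) := by
    rw [← map_one (algebraMap R O), ← map_sub, ← hcb, sub_add_cancel_left]
    exact Ideal.mem_map_of_mem _ (neg_mem hi)
  have hωcβ : ω * (c • β) = algebraMap R O (c * b) := by
    rw [mul_smul_comm, hωβ, Algebra.smul_def, map_mul]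
  have hcβω : (c • β) * ω = algebraMap R O (c * b) := by
    rw [smul_mul_assoc, hβω, Algebra.smul_def, map_mul]
  exact (𝔭.map (algebraMap R O)).bijOn_mulRightSup (hωcβ ▸ hcb_sub) (hcβω ▸ hcb_sub)
end

section
/- Let 𝔽_q be a finite field with q elements and let φ ∈ 𝔽_q[X] be monic irreducible with φ ≠ X. Then subexp(φ) = exp(φ)/gcd(q − 1, exp(φ)). -/
/-- For a polynomial `ψ` over a field, `polyExp ψ` is the least positive integer `e` such that
`ψ ∣ X^e − 1` (and `0` if none exists). -/
noncomputable def polyExp {F : Type*} [Field F] (ψ : Polynomial F) : ℕ :=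
  sInf {e : ℕ | 0 < e ∧ ψ ∣ Polynomial.X ^ e - 1}

/-- For a polynomial `ψ` over a field, `polySubexp ψ` is the least positive integer `e` such
that `ψ ∣ X^e − α` for some nonzero scalar `α` (and `0` if none exists). -/
noncomputable def polySubexp {F : Type*} [Field F] (ψ : Polynomial F) : ℕ :=
  sInf {e : ℕ | 0 < e ∧ ∃ α : F, α ≠ 0 ∧ ψ ∣ Polynomial.X ^ e - Polynomial.C α}

/-!
In `K = F[X]/(φ)`, a field, write `x` for the class of `X`; then `φ ∣ X^e - α` iff `x^e = α`.
So `exp(φ)` is the multiplicative order `n` of `x`. The nonzero elements of `F` are exactly the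
solutions of `y^(q-1) = 1` in `K`, so `subexp(φ)` is the least `e > 0` with `n ∣ e(q-1)`, i.e.
with `n / gcd(q-1, n) ∣ e`.
-/

open Polynomial

theorem Nat.sInf_setOf_pos_and_dvd (m : ℕ) : sInf {e : ℕ | 0 < e ∧ m ∣ e} = m := by
  rcases m.eq_zero_or_pos with rfl | hm
  · convert Nat.sInf_empty
    exact Set.eq_empty_of_forall_notMem fun e ⟨he, h0e⟩ => he.ne' (zero_dvd_iff.mp h0e)
  · exact le_antisymm (Nat.sInf_le ⟨hm, dvd_rfl⟩)
      (le_csInf ⟨m, hm, dvd_rfl⟩ fun e ⟨he, hme⟩ => Nat.le_of_dvd he hme)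

theorem Nat.dvd_mul_iff_div_gcd_dvd {n e k : ℕ} (hk : 0 < k) :
    n ∣ e * k ↔ n / Nat.gcd k n ∣ e := by
  rw [Nat.div_dvd_iff_dvd_mul (Nat.gcd_dvd_right k n) (Nat.gcd_pos_of_pos_left n hk),
    Nat.gcd_comm, mul_comm]
  exact dvd_gcd_mul_iff_dvd_mul.symm

theorem mem_range_algebraMap_of_pow_card_eq_self {F K : Type*} [Field F] [Fintype F] [CommRing K]
    [IsDomain K] [Algebra F K] {y : K} (hy : y ^ Fintype.card F = y) :
    y ∈ Set.range (algebraMap F K) := by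
  have hroots : Multiset.card (X ^ Fintype.card F - X : F[X]).roots =
      (X ^ Fintype.card F - X : F[X]).natDegree := by
    rw [FiniteField.roots_X_pow_card_sub_X, FiniteField.X_pow_card_sub_X_natDegree_eq F
      Fintype.one_lt_card]
    rfl
  have hy_root : y ∈ (map (algebraMap F K) (X ^ Fintype.card F - X)).roots := by
    rw [mem_roots_map (FiniteField.X_pow_card_sub_X_ne_zero F Fintype.one_lt_card)]
    simp [hy]
  rw [← roots_map_of_injective_of_card_eq_natDegree (algebraMap F K).injective hroots,
    Multiset.mem_map] at hy_root
  obtain ⟨α, -, rfl⟩ := hy_root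
  exact ⟨α, rfl⟩

theorem exists_ne_zero_algebraMap_eq_iff_pow_card_sub_one_eq_one {F K : Type*} [Field F]
    [Fintype F] [CommRing K] [IsDomain K] [Algebra F K] (y : K) :
    (∃ α : F, α ≠ 0 ∧ algebraMap F K α = y) ↔ y ^ (Fintype.card F - 1) = 1 := by
  have hq : Fintype.card F - 1 ≠ 0 := Nat.sub_ne_zero_of_lt Fintype.one_lt_card
  constructor
  · rintro ⟨α, hα, rfl⟩
    rw [← map_pow, FiniteField.pow_card_sub_one_eq_one α hα, map_one]
  · intro hy
    have hy0 : y ≠ 0 := by rintro rfl; exact zero_ne_one ((zero_pow hq).symm.trans hy)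
    obtain ⟨α, rfl⟩ : y ∈ Set.range (algebraMap F K) := by
      refine mem_range_algebraMap_of_pow_card_eq_self ?_
      rw [← Nat.sub_add_cancel Fintype.card_pos, pow_succ, hy, one_mul]
    exact ⟨α, by rintro rfl; exact hy0 (map_zero _), rfl⟩

theorem AdjoinRoot.dvd_X_pow_sub_C_iff {R : Type*} [CommRing R] (φ : R[X]) (e : ℕ) (a : R) :
    φ ∣ X ^ e - C a ↔ root φ ^ e = algebraMap R (AdjoinRoot φ) a := by
  rw [← mk_eq_zero, map_sub, map_pow, mk_X, mk_C, sub_eq_zero, algebraMap_eq]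

theorem polyExp_eq_orderOf_root {F : Type*} [Field F] (φ : F[X]) :
    polyExp φ = orderOf (AdjoinRoot.root φ) := by
  rw [polyExp, ← Nat.sInf_setOf_pos_and_dvd (orderOf _)]
  congr! 4 with e
  rw [orderOf_dvd_iff_pow_eq_one, ← C_1, AdjoinRoot.dvd_X_pow_sub_C_iff, map_one]

theorem polySubexp_eq_orderOf_root_div_gcd {F : Type*} [Field F] [Fintype F] (φ : F[X])
    (hφ : Irreducible φ) :
    polySubexp φ = orderOf (AdjoinRoot.root φ) /
      Nat.gcd (Fintype.card F - 1) (orderOf (AdjoinRoot.root φ)) := by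
  have : Fact (Irreducible φ) := ⟨hφ⟩
  rw [polySubexp, ← Nat.sInf_setOf_pos_and_dvd (_ / _)]
  congr! 4 with e
  simp_rw [AdjoinRoot.dvd_X_pow_sub_C_iff, eq_comm (a := AdjoinRoot.root φ ^ e)]
  rw [← Nat.dvd_mul_iff_div_gcd_dvd (Nat.sub_pos_of_lt Fintype.one_lt_card),
    orderOf_dvd_iff_pow_eq_one, pow_mul]
  exact exists_ne_zero_algebraMap_eq_iff_pow_card_sub_one_eq_one (F := F) (AdjoinRoot.root φ ^ e)

theorem polySubexp_eq_polyExp_div_gcd_general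
    {F : Type*} [Field F] [Fintype F]
    (φ : Polynomial F) (hirr : Irreducible φ) :
    polySubexp φ = polyExp φ / Nat.gcd (Fintype.card F - 1) (polyExp φ) := by
  rw [polySubexp_eq_orderOf_root_div_gcd φ hirr, polyExp_eq_orderOf_root]

/-- Let `𝔽_q` be a finite field with `q` elements and let `φ ∈ 𝔽_q[X]` be
monic irreducible with `φ ≠ X`. Then `subexp(φ) = exp(φ)/gcd(q − 1, exp(φ))`. -/
theorem polySubexp_eq_polyExp_div_gcd
    {F : Type*} [Field F] [Fintype F]
    (φ : Polynomial F) (hmonic : φ.Monic) (hirr : Irreducible φ)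
    (hX : φ ≠ Polynomial.X) :
    polySubexp φ = polyExp φ / Nat.gcd (Fintype.card F - 1) (polyExp φ) :=
  polySubexp_eq_polyExp_div_gcd_general φ hirr
end

section
/- Let 𝔽_q be a finite field with q elements and characteristic p, let φ ∈ 𝔽_q[X] be monic irreducible with φ ≠ X, and let j ≥ 1. Then subexp(φ^j) = subexp(φ)·p^t, where t = min{r ∈ ℤ_{≥0} : p^r ≥ j}. -/
/-!
Let `s = subexp φ`. In characteristic `p`, `(X^s - α)^(p^t) = X^(s p^t) - α^(p^t)`, and
`φ^j ∣ φ^(p^t)`, which gives `subexp (φ^j) ≤ s p^t`. Conversely, if `φ^j ∣ X^e - β`, then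
`φ ∣ X^e - β` forces `s ∣ e`. Write `e = p^u m` with `p ∤ m`; then `X^e - β` is the `p^u`-th
power of the separable polynomial `X^m - β^(1/p^u)`, and the irreducible `φ` divides a squarefree
polynomial at most once, so `j ≤ p^u` and hence `t ≤ u`. Finally `p ∤ s`, since otherwise
`X^s - α` would be a `p`-th power, contradicting minimality; so `s p^u ∣ e`.
-/

open Polynomial

theorem Squarefree.le_of_pow_dvd_pow {R : Type*} [CommMonoidWithZero R] [IsCancelMulZero R]
    {φ ψ : R} {j n : ℕ} (hψ : Squarefree ψ) (hφ : Prime φ) (h : φ ^ j ∣ ψ ^ n) : j ≤ n := by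
  have hmult : emultiplicity φ ψ ≤ 1 :=
    ((squarefree_iff_emultiplicity_le_one ψ).mp hψ φ).resolve_right hφ.not_isUnit
  have hj : (j : ℕ∞) ≤ n := by
    calc (j : ℕ∞) ≤ emultiplicity φ (ψ ^ n) := le_emultiplicity_of_pow_dvd h
      _ = n * emultiplicity φ ψ := emultiplicity_pow hφ
      _ ≤ n := mul_le_of_le_one_right' hmult
  exact_mod_cast hj

namespace Polynomial

variable {F : Type*} [Field F]

theorem Monic.isCoprime_X_of_irreducible {φ : F[X]} (hmonic : φ.Monic) (hirr : Irreducible φ)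
    (hX : φ ≠ X) : IsCoprime X φ :=
  (hirr.coprime_iff_not_dvd.mpr fun h =>
    hX (eq_of_monic_of_associated hmonic monic_X (hirr.associated_of_dvd irreducible_X h))).symm

theorem exists_dvd_X_pow_sub_one_of_isCoprime [Finite F] {ψ : F[X]} (hψ : ψ ≠ 0)
    (hco : IsCoprime X ψ) : ∃ e, 0 < e ∧ ψ ∣ X ^ e - 1 := by
  have : Module.Finite F (AdjoinRoot ψ) := (AdjoinRoot.powerBasis hψ).finite
  have : Finite (AdjoinRoot ψ) := Module.finite_of_finite F
  obtain ⟨a, b, hab⟩ := hco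
  have hunit : AdjoinRoot.root ψ * AdjoinRoot.mk ψ a = 1 := by
    simpa [mul_comm] using congrArg (AdjoinRoot.mk ψ) hab
  obtain ⟨e, he, hpow⟩ :=
    (isOfFinOrder_of_finite (Units.mkOfMulEqOne _ _ hunit)).exists_pow_eq_one
  refine ⟨e, he, AdjoinRoot.mk_eq_zero.mp ?_⟩
  simpa [sub_eq_zero, Units.ext_iff] using hpow

theorem X_pow_sub_C_pow_expChar_pow (p : ℕ) [ExpChar F p] (n k : ℕ) (a : F) :
    (X ^ n - C a) ^ p ^ k = X ^ (n * p ^ k) - C (a ^ p ^ k) := by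
  rw [sub_pow_expChar_pow, ← pow_mul, ← map_pow]

theorem pow_dvd_X_pow_mul_sub_C_pow (p : ℕ) [ExpChar F p] {ψ : F[X]} {e j k : ℕ} {α : F}
    (hj : j ≤ p ^ k) (h : ψ ∣ X ^ e - C α) : ψ ^ j ∣ X ^ (e * p ^ k) - C (α ^ p ^ k) := by
  rw [← X_pow_sub_C_pow_expChar_pow]
  exact (pow_dvd_pow ψ hj).trans (pow_dvd_pow_of_dvd h _)

theorem le_pow_factorization_of_pow_dvd_X_pow_sub_C (p : ℕ) [Fact p.Prime] [CharP F p]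
    [PerfectRing F p] {φ : F[X]} {e j : ℕ} {α : F} (hφ : Prime φ) (he : e ≠ 0) (hα : α ≠ 0)
    (h : φ ^ j ∣ X ^ e - C α) : j ≤ p ^ e.factorization p := by
  have hp : p.Prime := Fact.out
  set u := e.factorization p
  obtain ⟨γ, rfl⟩ := (bijective_iterateFrobenius F p u).surjective α
  rw [iterateFrobenius_def] at h hα
  have hsep : (X ^ (e / p ^ u) - C γ).Separable :=
    separable_X_pow_sub_C' p _ γ (Nat.not_dvd_ordCompl hp he)
      (ne_zero_pow (pow_ne_zero u hp.ne_zero) hα)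
  rw [← Nat.div_mul_cancel (Nat.ordProj_dvd e p), ← X_pow_sub_C_pow_expChar_pow] at h
  exact Squarefree.le_of_pow_dvd_pow hsep.squarefree hφ h

end Polynomial

section polySubexp

variable {F : Type*} [Field F] {ψ : F[X]} {e : ℕ} {α : F}

theorem polySubexp_le (he : 0 < e) (hα : α ≠ 0) (h : ψ ∣ X ^ e - C α) : polySubexp ψ ≤ e := by
  unfold polySubexp
  exact Nat.sInf_le ⟨he, α, hα, h⟩

theorem polySubexp_spec (he : 0 < e) (hα : α ≠ 0) (h : ψ ∣ X ^ e - C α) :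
    0 < polySubexp ψ ∧ ∃ β : F, β ≠ 0 ∧ ψ ∣ X ^ polySubexp ψ - C β := by
  unfold polySubexp
  exact Nat.sInf_mem (⟨e, he, α, hα, h⟩ : ∃ e, 0 < e ∧ ∃ α : F, α ≠ 0 ∧ ψ ∣ X ^ e - C α)

theorem polySubexp_dvd (he : 0 < e) (hα : α ≠ 0) (h : ψ ∣ X ^ e - C α) :
    polySubexp ψ ∣ e := by
  obtain ⟨hs, β, hβ, hsdvd⟩ := polySubexp_spec he hα h
  set s := polySubexp ψ
  set q := e / s
  by_contra hnd
  have hr : 0 < e % s := Nat.pos_of_ne_zero fun h0 => hnd (Nat.dvd_of_mod_eq_zero h0)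
  have hβq : β ^ q ≠ 0 := pow_ne_zero q hβ
  have hC : C β ^ q * C (α / β ^ q) = C α := by rw [← map_pow, ← C_mul, mul_div_cancel₀ _ hβq]
  have hsplit : X ^ e - C α =
      X ^ (e % s) * ((X ^ s) ^ q - C β ^ q) + C β ^ q * (X ^ (e % s) - C (α / β ^ q)) := by
    conv_lhs => rw [← Nat.div_add_mod e s, pow_add, pow_mul]
    linear_combination hC
  have hrem : ψ ∣ X ^ (e % s) - C (α / β ^ q) := by
    rw [hsplit, dvd_add_right
      (dvd_mul_of_dvd_right (hsdvd.trans (sub_dvd_pow_sub_pow _ _ q)) _)] at h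
    exact ((isUnit_C.mpr hβ.isUnit).pow q).dvd_mul_left.mp h
  exact (Nat.mod_lt e hs).not_ge (polySubexp_le hr (div_ne_zero hα hβq) hrem)

theorem not_dvd_polySubexp (p : ℕ) [Fact p.Prime] [CharP F p] [PerfectRing F p]
    (hψ : Prime ψ) (he : 0 < e) (hα : α ≠ 0) (h : ψ ∣ X ^ e - C α) : ¬ p ∣ polySubexp ψ := by
  have hp : p.Prime := Fact.out
  obtain ⟨hs, β, hβ, hsdvd⟩ := polySubexp_spec he hα h
  rintro ⟨n, hn⟩
  obtain ⟨γ, rfl⟩ := surjective_frobenius F p β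
  rw [frobenius_def] at hβ hsdvd
  have hn0 : 0 < n := Nat.pos_of_mul_pos_left (hn ▸ hs)
  have hγ : ψ ∣ X ^ n - C γ := by
    have hfrob := X_pow_sub_C_pow_expChar_pow p n 1 γ
    rw [pow_one, mul_comm, ← hn] at hfrob
    exact hψ.dvd_of_dvd_pow (hfrob ▸ hsdvd)
  have hle := polySubexp_le hn0 (ne_zero_pow hp.ne_zero hβ) hγ
  have hlt : n < p * n := lt_mul_left hn0 hp.one_lt
  omega

end polySubexp

/-- Let `𝔽_q` be a finite field with `q` elements and characteristic `p`,
let `φ ∈ 𝔽_q[X]` be monic irreducible with `φ ≠ X`, and let `j ≥ 1`. Then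
`subexp(φ^j) = subexp(φ) · p^t`, where `t = min {r ∈ ℤ_{≥0} : p^r ≥ j}`. -/
theorem polySubexp_pow
    {F : Type*} [Field F] [Fintype F] (p : ℕ) [Fact p.Prime] [CharP F p]
    (φ : Polynomial F) (hmonic : φ.Monic) (hirr : Irreducible φ)
    (hX : φ ≠ Polynomial.X) (j : ℕ) (hj : 1 ≤ j) :
    polySubexp (φ ^ j) = polySubexp φ * p ^ sInf {r : ℕ | j ≤ p ^ r} := by
  have hp : p.Prime := Fact.out
  set t := sInf {r : ℕ | j ≤ p ^ r}
  obtain ⟨e₁, he₁, h₁⟩ := exists_dvd_X_pow_sub_one_of_isCoprime hirr.ne_zero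
    (hmonic.isCoprime_X_of_irreducible hirr hX)
  rw [← C_1] at h₁
  obtain ⟨hs, α, hα, hsdvd⟩ := polySubexp_spec he₁ one_ne_zero h₁
  have hps : ¬ p ∣ polySubexp φ := not_dvd_polySubexp p hirr.prime he₁ one_ne_zero h₁
  have ht : j ≤ p ^ t := Nat.sInf_mem (s := {r | j ≤ p ^ r}) ⟨j, (Nat.lt_pow_self hp.one_lt).le⟩
  have hst : 0 < polySubexp φ * p ^ t := Nat.mul_pos hs (pow_pos hp.pos t)
  have hup := pow_dvd_X_pow_mul_sub_C_pow p ht hsdvd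
  refine le_antisymm (polySubexp_le hst (pow_ne_zero _ hα) hup) ?_
  obtain ⟨he, β, hβ, hdvd⟩ := polySubexp_spec hst (pow_ne_zero _ hα) hup
  set e := polySubexp (φ ^ j)
  have hse : polySubexp φ ∣ e := polySubexp_dvd he hβ ((dvd_pow_self φ (by omega)).trans hdvd)
  have hju : j ≤ p ^ e.factorization p :=
    le_pow_factorization_of_pow_dvd_X_pow_sub_C p hirr.prime he.ne' hβ hdvd
  have hcop : (polySubexp φ).Coprime (p ^ e.factorization p) :=
    ((hp.coprime_iff_not_dvd.mpr hps).symm).pow_right _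
  calc polySubexp φ * p ^ t ≤ polySubexp φ * p ^ e.factorization p :=
        Nat.mul_le_mul_left _ (Nat.pow_le_pow_right hp.pos (Nat.sInf_le hju))
    _ ≤ e := Nat.le_of_dvd he (hcop.mul_dvd_of_dvd_of_dvd hse (Nat.ordProj_dvd e p))
end

section
/- Let 𝔽_q be a finite field with q elements, let φ ∈ 𝔽_q[X] be monic irreducible of degree d with φ ≠ X, let k ≥ 1, and set m = kd. Let Q ∈ GL_m(𝔽_q) be a matrix whose characteristic polynomial and minimal polynomial are both equal to φ^k. For j = 1, …, k set f_j = subexp(φ^j). Then for every ℓ ≥ 1, the number of orbits of cardinality ℓ of the permutation τ_Q on ℙ^{m−1}(𝔽_q) equals the sum over all j with 1 ≤ j ≤ k and f_j = ℓ of (q^{jd} − q^{(j−1)d})/((q − 1)·ℓ). -/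
/-- The permutation `τ_Q` of `ℙ^{m-1}(F) = ℙ F (Fin m → F)` induced by `Q ∈ GL_m(F)`,
sending the class `[v]` to `[Q v]`. -/
noncomputable def tauQ {F : Type*} [Field F] {m : ℕ}
    (Q : Matrix.GeneralLinearGroup (Fin m) F) :
    Projectivization F (Fin m → F) → Projectivization F (Fin m → F) :=
  Projectivization.map (Matrix.mulVecLin (Q : Matrix (Fin m) (Fin m) F))
    (by
      intro x y hxy
      have h := congrArg
        (Matrix.mulVec ((Q⁻¹ : Matrix.GeneralLinearGroup (Fin m) F) :
          Matrix (Fin m) (Fin m) F)) hxy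
      have hQ : ((Q : Matrix (Fin m) (Fin m) F))⁻¹ * (Q : Matrix (Fin m) (Fin m) F) = 1 :=
        Matrix.nonsing_inv_mul _ ((Matrix.isUnit_iff_isUnit_det _).mp Q.isUnit)
      simpa [Matrix.mulVecLin_apply, Matrix.mulVec_mulVec, hQ] using h)

/-!
Let `T` be `v ↦ Q v`. Since `φ` is prime and `φ ^ k` kills `F^m`, the annihilator in `F[X]` of a
nonzero `v` is `(φ ^ j)` for some `1 ≤ j ≤ k`, the level of `v`; it only depends on the line `[v]`
and is preserved by `T`. The line `[v]` is fixed by `τ_Q^n` iff `T^n v = α v` with `α ≠ 0`, that is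
iff `φ ^ j ∣ X^n - α`, so every line of level `j` has period `subexp(φ ^ j)`, and the orbits of
length `ℓ` are counted level by level: a level holds `#(lines) / ℓ` of them.

The vectors of level `j` form `ker φ(T)^j \ ker φ(T)^(j-1)`. A vector `v₀` with annihilator
`(φ ^ k)` maps the polynomials of degree `< j d` injectively into `ker φ(T)^j` (via
`s ↦ (φ^(k-j) s)(T) v₀`) and those of degree `< (k-j) d` into the range of `φ(T)^j`; since
`dim F^m = k d`, rank–nullity forces `dim ker φ(T)^j = j d`.
-/

open Function Set

namespace Function

variable {α : Type*} {f : α → α} {x : α}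

theorem ncard_range_iterate (hx : x ∈ periodicPts f) :
    (range (f^[·] x)).ncard = minimalPeriod f x := by
  have hrange : range (f^[·] x) = (f^[·] x) '' Iio (minimalPeriod f x) := by
    refine (image_subset_range _ _).antisymm' ?_
    rintro _ ⟨n, rfl⟩
    exact ⟨n % minimalPeriod f x, Nat.mod_lt _ (minimalPeriod_pos_of_mem_periodicPts hx),
      iterate_mod_minimalPeriod_eq⟩
  rw [hrange, iterate_injOn_Iio_minimalPeriod.ncard_image, ncard_Iio_nat]

theorem mem_range_iterate_iff (hx : x ∈ periodicPts f) {y : α} :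
    y ∈ range (f^[·] x) ↔ range (f^[·] y) = range (f^[·] x) := by
  refine ⟨?_, fun h => h ▸ ⟨0, rfl⟩⟩
  rintro ⟨n, rfl⟩
  ext z
  simp only [mem_range, ← mem_periodicOrbit_iff hx,
    ← mem_periodicOrbit_iff ((bijOn_periodicPts f).mapsTo.iterate n hx),
    periodicOrbit_apply_iterate_eq hx]

open Finset in
theorem Injective.card_image_range_iterate_mul [Finite α] [DecidableEq α] (hf : Injective f)
    {s : Finset α} (hs : ∀ x ∈ s, ∀ n, f^[n] x ∈ s) {ℓ : ℕ}
    (hℓ : ∀ x ∈ s, minimalPeriod f x = ℓ) :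
    #(s.image fun x => range (f^[·] x)) * ℓ = #s := by
  rw [card_eq_sum_card_image (fun x => range (f^[·] x)) s]
  refine (sum_const_nat fun o ho => ?_).symm
  obtain ⟨y, hy, rfl⟩ := mem_image.mp ho
  have hfiber : (({x ∈ s | range (f^[·] x) = range (f^[·] y)} : Finset α) : Set α) =
      range (f^[·] y) := by
    ext x
    rw [coe_filter, Set.mem_ofPred_eq, ← mem_range_iterate_iff (hf.mem_periodicPts y),
      and_iff_right_iff_imp]
    rintro ⟨n, rfl⟩
    exact hs y hy n
  rw [← ncard_coe_finset, hfiber, ncard_range_iterate (hf.mem_periodicPts y), hℓ y hy]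

open Finset in
theorem Injective.card_orbits_ncard_eq_sum [Finite α] {ι : Type*} (hf : Injective f)
    (g : α → ι) (hg : g ∘ f = g) (p : ι → ℕ) (hp : ∀ x, minimalPeriod f x = p (g x))
    (I : Finset ι) (hI : ∀ x, g x ∈ I) (ℓ : ℕ) :
    Nat.card {s : Set α // (∃ x, s = range (f^[·] x)) ∧ s.ncard = ℓ} =
      ∑ i ∈ I with p i = ℓ, Nat.card {x // g x = i} / ℓ := by
  classical
  have := Fintype.ofFinite α
  set orbit : α → Set α := fun x => range (f^[·] x)
  have hg_iterate : ∀ x n, g (f^[n] x) = g x := fun x n => congrFun (iterate_invariant hg n) x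
  let S : ι → Finset α := fun i => {x | g x = i}
  have hS : ∀ {x i}, x ∈ S i ↔ g x = i := by simp [S]
  have hunion : {s : Set α | (∃ x, s = orbit x) ∧ s.ncard = ℓ} =
      ↑({i ∈ I | p i = ℓ}.biUnion fun i => (S i).image orbit) := by
    ext s
    simp only [Set.mem_ofPred, coe_biUnion, mem_coe, mem_filter, coe_image, hS, mem_iUnion,
      Set.mem_image, exists_prop]
    constructor
    · rintro ⟨⟨x, rfl⟩, hℓ⟩
      exact ⟨g x, ⟨hI x, by rw [← hp, ← ncard_range_iterate (hf.mem_periodicPts x), hℓ]⟩,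
        x, rfl, rfl⟩
    · rintro ⟨i, ⟨-, hi⟩, x, hx, rfl⟩
      exact ⟨⟨x, rfl⟩, by rw [ncard_range_iterate (hf.mem_periodicPts x), hp, hx, hi]⟩
  have hdisj : (({i ∈ I | p i = ℓ} : Finset ι) : Set ι).PairwiseDisjoint
      fun i => (S i).image orbit := by
    intro i _ j _ hij
    refine disjoint_left.mpr fun o hoi hoj => hij ?_
    obtain ⟨x, hx, rfl⟩ := mem_image.mp hoi
    obtain ⟨y, hy, hyx⟩ := mem_image.mp hoj
    obtain ⟨n, rfl⟩ := (mem_range_iterate_iff (hf.mem_periodicPts x)).mpr hyx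
    rw [← hS.mp hx, ← hS.mp hy, hg_iterate]
  have hcard_orbits : ∀ i, #((S i).image orbit) = #(S i) / p i := by
    intro i
    rcases (S i).eq_empty_or_nonempty with hempty | ⟨x, hx⟩
    · simp [hempty]
    refine (Nat.div_eq_of_eq_mul_left ?_ (hf.card_image_range_iterate_mul ?_ ?_).symm).symm
    · exact hS.mp hx ▸ hp x ▸ minimalPeriod_pos_of_mem_periodicPts (hf.mem_periodicPts x)
    · exact fun y hy n => hS.mpr ((hg_iterate y n).trans (hS.mp hy))
    · exact fun y hy => (hp y).trans (congrArg p (hS.mp hy))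
  calc Nat.card {s : Set α // (∃ x, s = orbit x) ∧ s.ncard = ℓ}
      = #({i ∈ I | p i = ℓ}.biUnion fun i => (S i).image orbit) := by
        rw [← ncard_coe_finset, ← hunion, ← Nat.card_coe_set_eq]; rfl
    _ = ∑ i ∈ I with p i = ℓ, Nat.card {x // g x = i} / ℓ := by
        rw [card_biUnion hdisj]
        refine sum_congr rfl fun i hi => ?_
        rw [hcard_orbits, (mem_filter.mp hi).2, Nat.card_eq_fintype_card, Fintype.card_subtype]

end Function

open Polynomial Module
open scoped LinearAlgebra.Projectivization

namespace Module.End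

variable {K V : Type*} [Field K] [AddCommGroup V] [Module K V] (T : Module.End K V)

/-- When a power of the prime `φ` kills `v`, the annihilator of `v` in `K[X]` is generated by
`φ ^ annihilatorExponent T φ v` (`aeval_apply_eq_zero_iff`). -/
noncomputable def annihilatorExponent (φ : K[X]) (v : V) : ℕ :=
  sInf {j | aeval T (φ ^ j) v = 0}

variable {T} {φ ψ χ : K[X]} {v : V} {j k : ℕ}

theorem aeval_apply_eq_zero_of_dvd (h : ψ ∣ χ) (hψ : aeval T ψ v = 0) : aeval T χ v = 0 := by
  obtain ⟨c, rfl⟩ := h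
  rw [mul_comm, map_mul, mul_apply, hψ, map_zero]

theorem aeval_apply_comm (p : K[X]) (v : V) : aeval T p (T v) = T (aeval T p v) :=
  calc aeval T p (T v) = aeval T (p * X) v := by rw [map_mul, aeval_X]; rfl
    _ = aeval T (X * p) v := by rw [mul_comm]
    _ = T (aeval T p v) := by rw [map_mul, aeval_X]; rfl

theorem annihilatorExponent_zero : annihilatorExponent T φ 0 = 0 :=
  Nat.sInf_eq_zero.mpr (Or.inl (LinearMap.map_zero _))

theorem annihilatorExponent_le (hv : aeval T (φ ^ k) v = 0) : annihilatorExponent T φ v ≤ k :=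
  Nat.sInf_le hv

theorem aeval_apply_eq_zero_iff (hφ : Prime φ) (hv : aeval T (φ ^ k) v = 0) :
    aeval T ψ v = 0 ↔ φ ^ annihilatorExponent T φ v ∣ ψ := by
  classical
  set e := annihilatorExponent T φ v
  have he : aeval T (φ ^ e) v = 0 := Nat.sInf_mem (s := {j | aeval T (φ ^ j) v = 0}) ⟨k, hv⟩
  refine ⟨fun hψ => ?_, fun h => aeval_apply_eq_zero_of_dvd h he⟩
  -- Bézout: the gcd of two annihilating polynomials still annihilates `v`.
  have hgcd : aeval T (EuclideanDomain.gcd ψ (φ ^ e)) v = 0 := by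
    rw [EuclideanDomain.gcd_eq_gcd_ab, map_add, LinearMap.add_apply,
      aeval_apply_eq_zero_of_dvd (dvd_mul_right _ _) hψ,
      aeval_apply_eq_zero_of_dvd (dvd_mul_right _ _) he, add_zero]
  obtain ⟨i, hie, hi⟩ := (dvd_prime_pow hφ e).mp (EuclideanDomain.gcd_dvd_right ψ (φ ^ e))
  have hei : e ≤ i := Nat.sInf_le (aeval_apply_eq_zero_of_dvd hi.dvd hgcd)
  rw [show e = i by omega]
  exact hi.symm.dvd.trans (EuclideanDomain.gcd_dvd_left ψ (φ ^ e))

theorem annihilatorExponent_le_iff (hφ : Prime φ) (hv : aeval T (φ ^ k) v = 0) :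
    annihilatorExponent T φ v ≤ j ↔ aeval T (φ ^ j) v = 0 := by
  rw [aeval_apply_eq_zero_iff hφ hv, pow_dvd_pow_iff hφ.ne_zero hφ.not_isUnit]

theorem annihilatorExponent_pos (hv : v ≠ 0) (hk : aeval T (φ ^ k) v = 0) :
    0 < annihilatorExponent T φ v := by
  refine Nat.pos_of_ne_zero fun h => ?_
  rcases Nat.sInf_eq_zero.mp h with h0 | hempty
  · exact hv (by simpa using h0)
  · exact hempty.subset hk

theorem annihilatorExponent_smul {c : K} (hc : c ≠ 0) (v : V) :
    annihilatorExponent T φ (c • v) = annihilatorExponent T φ v := by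
  simp only [annihilatorExponent, map_smul, smul_eq_zero, hc, false_or]

theorem annihilatorExponent_apply (hT : Function.Injective T) (v : V) :
    annihilatorExponent T φ (T v) = annihilatorExponent T φ v := by
  simp only [annihilatorExponent, aeval_apply_comm, map_eq_zero_iff T hT]

theorem exists_aeval_apply_eq_zero_iff (hφ : Prime φ) (hT : minpoly K T = φ ^ k) :
    ∃ v₀ : V, ∀ ψ, aeval T ψ v₀ = 0 ↔ φ ^ k ∣ ψ := by
  cases k with
  | zero => exact ⟨0, by simp⟩
  | succ k =>
    obtain ⟨v₀, hv₀⟩ : ∃ v₀, aeval T (φ ^ k) v₀ ≠ 0 := by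
      by_contra! h
      have := minpoly.dvd K T (LinearMap.ext h)
      rw [hT, pow_dvd_pow_iff hφ.ne_zero hφ.not_isUnit] at this
      omega
    have hkill : aeval T (φ ^ (k + 1)) v₀ = 0 := by rw [← hT, minpoly.aeval]; rfl
    have he : annihilatorExponent T φ v₀ = k + 1 :=
      (annihilatorExponent_le hkill).antisymm <| Nat.succ_le_of_lt <| lt_of_not_ge
        fun h => hv₀ ((annihilatorExponent_le_iff hφ hkill).mp h)
    exact ⟨v₀, fun ψ => by rw [aeval_apply_eq_zero_iff hφ hkill, he]⟩

theorem le_finrank_of_aeval_pow_mul_mem [FiniteDimensional K V] {v₀ : V}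
    (hv₀ : ∀ ψ, aeval T ψ v₀ = 0 ↔ φ ^ k ∣ ψ) (hφ0 : φ ≠ 0) {i : ℕ} (hi : i ≤ k)
    {W : Submodule K V} (hW : ∀ s, aeval T (φ ^ i * s) v₀ ∈ W) :
    (k - i) * φ.natDegree ≤ finrank K W := by
  let L : degreeLT K ((k - i) * φ.natDegree) →ₗ[K] W :=
    LinearMap.codRestrict W ((LinearMap.applyₗ v₀ ∘ₗ (aeval T).toLinearMap ∘ₗ
      LinearMap.mulLeft K (φ ^ i)) ∘ₗ (degreeLT K _).subtype) fun s => hW s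
  have hL : Function.Injective L := by
    refine (injective_iff_map_eq_zero L).mpr fun s hs => ?_
    have hdvd : φ ^ (k - i) ∣ s := by
      have : φ ^ i * φ ^ (k - i) ∣ φ ^ i * s := by
        rw [pow_mul_pow_sub φ hi, ← hv₀]
        exact congrArg Subtype.val hs
      exact (mul_dvd_mul_iff_left (pow_ne_zero i hφ0)).mp this
    refine Subtype.ext (eq_zero_of_dvd_of_degree_lt hdvd ?_)
    rw [degree_eq_natDegree (pow_ne_zero _ hφ0), natDegree_pow]
    exact_mod_cast mem_degreeLT.mp s.2
  simpa [(degreeLTEquiv K _).finrank_eq] using LinearMap.finrank_le_finrank_of_injective hL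

theorem finrank_ker_aeval_pow [FiniteDimensional K V] (hφ : Prime φ) (hT : minpoly K T = φ ^ k)
    (hV : finrank K V = k * φ.natDegree) (hj : j ≤ k) :
    finrank K (LinearMap.ker (aeval T (φ ^ j))) = j * φ.natDegree := by
  obtain ⟨v₀, hv₀⟩ := exists_aeval_apply_eq_zero_iff hφ hT
  have hker := le_finrank_of_aeval_pow_mul_mem hv₀ hφ.ne_zero (Nat.sub_le k j)
    (W := LinearMap.ker (aeval T (φ ^ j))) fun s => by
      rw [LinearMap.mem_ker, ← mul_apply, ← map_mul, ← mul_assoc, ← pow_add,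
        Nat.add_sub_cancel' hj, hv₀]
      exact dvd_mul_right _ _
  have hrange := le_finrank_of_aeval_pow_mul_mem hv₀ hφ.ne_zero hj
    (W := LinearMap.range (aeval T (φ ^ j))) fun s => by
      rw [map_mul, mul_apply]
      exact LinearMap.mem_range_self _ _
  have hsum := LinearMap.finrank_range_add_finrank_ker (aeval T (φ ^ j))
  have hsplit : (k - j) * φ.natDegree + j * φ.natDegree = k * φ.natDegree := by
    rw [← add_mul, Nat.sub_add_cancel hj]
  rw [Nat.sub_sub_self hj] at hker
  omega

theorem card_annihilatorExponent_eq [FiniteDimensional K V] [Finite K] (hφ : Prime φ)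
    (hT : minpoly K T = φ ^ k) (hV : finrank K V = k * φ.natDegree) (hj : 1 ≤ j)
    (hjk : j ≤ k) :
    Nat.card {v : V // annihilatorExponent T φ v = j} =
      Nat.card K ^ (j * φ.natDegree) - Nat.card K ^ ((j - 1) * φ.natDegree) := by
  have : Finite V := Module.finite_of_finite K
  have hcard : ∀ i ≤ k,
      {v | annihilatorExponent T φ v ≤ i}.ncard = Nat.card K ^ (i * φ.natDegree) := by
    intro i hi
    have hker : (LinearMap.ker (aeval T (φ ^ i)) : Set V) =
        {v | annihilatorExponent T φ v ≤ i} := by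
      ext v
      exact (annihilatorExponent_le_iff hφ (by rw [← hT, minpoly.aeval]; rfl)).symm
    rw [← hker, ← Nat.card_coe_set_eq, SetLike.coe_sort_coe, natCard_eq_pow_finrank (K := K),
      finrank_ker_aeval_pow hφ hT hV hi]
  have hlevel : {v | annihilatorExponent T φ v = j} =
      {v | annihilatorExponent T φ v ≤ j} \ {v | annihilatorExponent T φ v ≤ j - 1} := by
    ext v
    simp only [Set.mem_sdiff, Set.mem_ofPred_eq]
    omega
  have hsub : {v | annihilatorExponent T φ v ≤ j - 1} ⊆ {v | annihilatorExponent T φ v ≤ j} :=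
    fun v hv => le_trans hv (Nat.sub_le j 1)
  rw [← Set.coe_ofPred, Nat.card_coe_set_eq, hlevel, Set.ncard_sdiff hsub, hcard j hjk,
    hcard (j - 1) (by omega)]

end Module.End

namespace Projectivization

variable {K V : Type*} [Field K] [AddCommGroup V] [Module K V]

theorem card_subtype_rep_mul_card_units (p : V → Prop) (h0 : ¬p 0)
    (hp : ∀ (a : Kˣ) v, p (a • v) ↔ p v) :
    Nat.card {P : ℙ K V // p P.rep} * Nat.card Kˣ = Nat.card {v // p v} := by
  have hrep : ∀ w : {v : V // v ≠ 0}, p w ↔ p (mk K w.1 w.2).rep := fun w => by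
    obtain ⟨a, ha⟩ := exists_smul_eq_mk_rep K w.1 w.2
    rw [← ha, hp]
  rw [← Nat.card_prod]
  calc Nat.card ({P : ℙ K V // p P.rep} × Kˣ)
      = Nat.card {x : ℙ K V × Kˣ // p x.1.rep} :=
        Nat.card_congr Equiv.prodSubtypeFstEquivSubtypeProd.symm
    _ = Nat.card {w : {v : V // v ≠ 0} // p w} :=
        Nat.card_congr ((nonZeroEquivProjectivizationProdUnits K V).subtypeEquiv hrep).symm
    _ = Nat.card {v // p v} :=
        Nat.card_congr (Equiv.subtypeSubtypeEquivSubtype fun hv h => h0 (h ▸ hv))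

theorem card_subtype_rep_eq_div [Finite K] (p : V → Prop) (h0 : ¬p 0)
    (hp : ∀ (a : Kˣ) v, p (a • v) ↔ p v) :
    Nat.card {P : ℙ K V // p P.rep} = Nat.card {v // p v} / (Nat.card K - 1) := by
  rw [← card_subtype_rep_mul_card_units p h0 hp, ← Nat.card_units,
    Nat.mul_div_cancel _ Nat.card_pos]

variable {T : Module.End K V} (hT : Injective T)

theorem map_iterate_mk (n : ℕ) {v : V} (hv : v ≠ 0) :
    (map T hT)^[n] (mk K v hv) = mk K ((T ^ n) v)
      (by rwa [End.coe_pow, Ne, (hT.iterate n).eq_iff' (iterate_map_zero T n)]) := by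
  induction n with
  | zero => rfl
  | succ n ih => simp only [iterate_succ_apply', ih, map_mk, pow_succ', End.mul_apply]

theorem isPeriodicPt_map_iff (P : ℙ K V) (n : ℕ) :
    IsPeriodicPt (map T hT) n P ↔ ∃ c : K, c ≠ 0 ∧ aeval T (X ^ n - C c) P.rep = 0 := by
  conv_lhs => rw [← mk_rep P]
  have haeval : ∀ c : K, aeval T (X ^ n - C c) P.rep = (T ^ n) P.rep - c • P.rep := by simp
  rw [IsPeriodicPt, IsFixedPt, map_iterate_mk, mk_eq_mk_iff]
  simp only [haeval, sub_eq_zero]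
  constructor
  · rintro ⟨a, ha⟩
    exact ⟨a, a.ne_zero, ha.symm⟩
  · rintro ⟨c, hc, h⟩
    exact ⟨Units.mk0 c hc, h.symm⟩

theorem minimalPeriod_map {φ : K[X]} {k : ℕ} (hφ : Prime φ) (hk : aeval T (φ ^ k) = 0)
    (P : ℙ K V) :
    minimalPeriod (map T hT) P = polySubexp (φ ^ End.annihilatorExponent T φ P.rep) := by
  rw [minimalPeriod_eq_sInf_n_pos_IsPeriodicPt, polySubexp]
  congr 1
  ext n
  simp only [Set.mem_ofPred_eq, isPeriodicPt_map_iff,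
    End.aeval_apply_eq_zero_iff hφ (LinearMap.congr_fun hk P.rep)]

theorem annihilatorExponent_rep_mk (φ : K[X]) {v : V} (hv : v ≠ 0) :
    End.annihilatorExponent T φ (mk K v hv).rep = End.annihilatorExponent T φ v := by
  obtain ⟨a, ha⟩ := exists_smul_eq_mk_rep K v hv
  rw [← ha, Units.smul_def, End.annihilatorExponent_smul a.ne_zero]

theorem annihilatorExponent_rep_map (φ : K[X]) (P : ℙ K V) :
    End.annihilatorExponent T φ (map T hT P).rep = End.annihilatorExponent T φ P.rep := by
  induction P using ind with
  | h v hv =>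
    rw [map_mk, annihilatorExponent_rep_mk, annihilatorExponent_rep_mk,
      End.annihilatorExponent_apply hT]

end Projectivization

open Module.End Projectivization in
theorem card_orbits_tauQ_of_charpoly_eq_minpoly_eq_pow_irreducible_general
    {F : Type*} [Field F] [Fintype F]
    (φ : Polynomial F) (hirr : Irreducible φ)
    {k m : ℕ} (hm : m = k * φ.natDegree)
    (Q : Matrix.GeneralLinearGroup (Fin m) F)
    (hmin : minpoly F (Q : Matrix (Fin m) (Fin m) F) = φ ^ k)
    (ℓ : ℕ) :
    Nat.card {s : Set (Projectivization F (Fin m → F)) //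
        (∃ v : Projectivization F (Fin m → F),
          s = {w | ∃ n : ℕ, (tauQ Q)^[n] v = w}) ∧ s.ncard = ℓ} =
      ∑ j ∈ (Finset.Icc 1 k).filter (fun j => polySubexp (φ ^ j) = ℓ),
        (Fintype.card F ^ (j * φ.natDegree) - Fintype.card F ^ ((j - 1) * φ.natDegree)) /
          ((Fintype.card F - 1) * ℓ) := by
  set T := Matrix.mulVecLin (Q : Matrix (Fin m) (Fin m) F)
  have hT : Injective T := Matrix.mulVec_injective_iff_isUnit.mpr Q.isUnit
  have hφ : Prime φ := hirr.prime
  have hminT : minpoly F T = φ ^ k := by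
    rw [← hmin, ← Matrix.minpoly_toLin', Matrix.toLin'_apply']
  have hkill : aeval T (φ ^ k) = 0 := hminT ▸ minpoly.aeval F T
  have hV : finrank F (Fin m → F) = k * φ.natDegree := by rw [finrank_fin_fun, hm]
  have hlevel : ∀ P : ℙ F (Fin m → F), annihilatorExponent T φ P.rep ∈ Finset.Icc 1 k := fun P =>
    Finset.mem_Icc.mpr ⟨annihilatorExponent_pos P.rep_nonzero (LinearMap.congr_fun hkill _),
      annihilatorExponent_le (LinearMap.congr_fun hkill _)⟩
  refine ((map_injective T hT).card_orbits_ncard_eq_sum (fun P => annihilatorExponent T φ P.rep)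
    (_root_.funext (annihilatorExponent_rep_map hT φ)) (fun j => polySubexp (φ ^ j))
    (minimalPeriod_map hT hφ hkill) _ hlevel ℓ).trans (Finset.sum_congr rfl fun j hj => ?_)
  obtain ⟨hj1, hjk⟩ := Finset.mem_Icc.mp (Finset.mem_filter.mp hj).1
  rw [card_subtype_rep_eq_div (fun v => annihilatorExponent T φ v = j)
      (by rw [annihilatorExponent_zero]; omega)
      (fun a v => by rw [Units.smul_def, annihilatorExponent_smul a.ne_zero]),
    card_annihilatorExponent_eq hφ hminT hV hj1 hjk, Nat.card_eq_fintype_card,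
    Nat.div_div_eq_div_mul]

/-- **Fripertinger.** Let `𝔽_q` be a finite field with `q` elements, let
`φ ∈ 𝔽_q[X]` be monic irreducible of degree `d` with `φ ≠ X`, let `k ≥ 1`, and `m = k d`.
Let `Q ∈ GL_m(𝔽_q)` have characteristic polynomial and minimal polynomial both equal to
`φ^k`. For `j = 1, …, k` set `f_j = subexp(φ^j)`. Then for every `ℓ ≥ 1`, the number of
orbits of cardinality `ℓ` of the permutation `τ_Q` on `ℙ^{m−1}(𝔽_q)` (orbits of the cyclic
group generated by `τ_Q`, here described as forward orbits under iteration) equals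
`∑_{1 ≤ j ≤ k, f_j = ℓ} (q^{jd} − q^{(j−1)d})/((q − 1) ℓ)`. -/
theorem card_orbits_tauQ_of_charpoly_eq_minpoly_eq_pow_irreducible
    {F : Type*} [Field F] [Fintype F]
    (φ : Polynomial F) (hmonic : φ.Monic) (hirr : Irreducible φ)
    (hX : φ ≠ Polynomial.X)
    {k m : ℕ} (hk : 1 ≤ k) (hm : m = k * φ.natDegree)
    (Q : Matrix.GeneralLinearGroup (Fin m) F)
    (hchar : Matrix.charpoly (Q : Matrix (Fin m) (Fin m) F) = φ ^ k)
    (hmin : minpoly F (Q : Matrix (Fin m) (Fin m) F) = φ ^ k)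
    (ℓ : ℕ) (hℓ : 1 ≤ ℓ) :
    Nat.card {s : Set (Projectivization F (Fin m → F)) //
        (∃ v : Projectivization F (Fin m → F),
          s = {w | ∃ n : ℕ, (tauQ Q)^[n] v = w}) ∧ s.ncard = ℓ} =
      ∑ j ∈ (Finset.Icc 1 k).filter (fun j => polySubexp (φ ^ j) = ℓ),
        (Fintype.card F ^ (j * φ.natDegree) - Fintype.card F ^ ((j - 1) * φ.natDegree)) /
          ((Fintype.card F - 1) * ℓ) :=
  card_orbits_tauQ_of_charpoly_eq_minpoly_eq_pow_irreducible_general φ hirr hm Q hmin ℓ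
end

section
/- Let 𝔽_q be a finite field with q elements and Q ∈ GL_2(𝔽_q). Let ℓ be the least positive integer such that Q^ℓ is a scalar matrix (i.e., Q^ℓ = α·I for some α ∈ 𝔽_q^×). Then every point v ∈ ℙ^1(𝔽_q) with τ_Q(v) ≠ v lies in an ℓ-cycle of τ_Q: the least positive integer n with τ_Q^n(v) = v equals ℓ. -/
/-!
Write `v = [w]`. Then `τ_Q^n [w] = [Q^n w]`, so `τ_Q^n` fixes `[w]` exactly when `w` is an
eigenvector of `Q^n`; in particular `τ_Q^ℓ` fixes every point. Conversely, if `τ_Q [w] ≠ [w]`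
then `Q w, w` is a basis of `F^2`, and an eigenvector `w` of `Q^n`, say with eigenvalue `a`,
forces `Q^n (Q w) = Q (Q^n w) = a Q w`; so `Q^n = a • 1` and `ℓ ≤ n`.
-/

open Matrix Projectivization

namespace Module.End

theorem eq_smul_one_of_commute_of_apply_eq_smul {F V : Type*} [Field F] [AddCommGroup V]
    [Module F V] (hV : Module.finrank F V = 2) {f g : Module.End F V} (hfg : Commute f g)
    {v : V} (hv : LinearIndependent F ![f v, v]) {a : F} (hgv : g v = a • v) :
    g = a • 1 := by
  let B := basisOfLinearIndependentOfCardEqFinrank hv (by simp [hV])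
  have hB : ⇑B = ![f v, v] := coe_basisOfLinearIndependentOfCardEqFinrank hv _
  refine B.ext fun i => ?_
  fin_cases i
  · have hgfv : g (f v) = a • f v := by
      rw [← Module.End.mul_apply, ← hfg.eq, Module.End.mul_apply, hgv, map_smul]
    simpa [hB] using hgfv
  · simpa [hB] using hgv

end Module.End

theorem Matrix.eq_smul_one_of_commute_of_mulVec_eq_smul {F : Type*} [Field F]
    {M N : Matrix (Fin 2) (Fin 2) F} (hMN : Commute M N) {v : Fin 2 → F}
    (hv : LinearIndependent F ![M *ᵥ v, v]) {a : F} (hNv : N *ᵥ v = a • v) :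
    N = a • 1 := by
  apply toLinAlgEquiv'.injective
  rw [map_smul, map_one]
  exact Module.End.eq_smul_one_of_commute_of_apply_eq_smul (by simp) (hMN.map toLinAlgEquiv')
    (by simpa [toLinAlgEquiv'_apply] using hv) (by simpa [toLinAlgEquiv'_apply] using hNv)

section tauQ

variable {F : Type*} [Field F] {m : ℕ}

theorem Matrix.GeneralLinearGroup.mulVec_ne_zero (Q : GL (Fin m) F) {w : Fin m → F}
    (hw : w ≠ 0) : (Q : Matrix (Fin m) (Fin m) F) *ᵥ w ≠ 0 := by
  simpa using (mulVec_injective_of_isUnit Q.isUnit).ne hw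

theorem tauQ_mk (Q : GL (Fin m) F) (w : Fin m → F) (hw : w ≠ 0) :
    tauQ Q (mk F w hw) = mk F ((Q : Matrix (Fin m) (Fin m) F) *ᵥ w) (Q.mulVec_ne_zero hw) :=
  map_mk _ _ w hw

theorem tauQ_mul (P Q : GL (Fin m) F) : tauQ (P * Q) = tauQ P ∘ tauQ Q := by
  funext x
  induction x using Projectivization.ind with
  | h w hw => simp [tauQ_mk, mulVec_mulVec]

theorem iterate_tauQ (Q : GL (Fin m) F) (n : ℕ) : (tauQ Q)^[n] = tauQ (Q ^ n) := by
  induction n with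
  | zero =>
    funext x
    induction x using Projectivization.ind with
    | h w hw => simp [tauQ_mk]
  | succ n ih => rw [Function.iterate_succ', ih, pow_succ', tauQ_mul]

theorem tauQ_mk_eq_self_iff (Q : GL (Fin m) F) {w : Fin m → F} (hw : w ≠ 0) :
    tauQ Q (mk F w hw) = mk F w hw ↔ ∃ a : Fˣ, (Q : Matrix (Fin m) (Fin m) F) *ᵥ w = a • w := by
  simp only [tauQ_mk, mk_eq_mk_iff, eq_comm (b := (Q : Matrix (Fin m) (Fin m) F) *ᵥ w)]

theorem linearIndependent_of_tauQ_mk_ne (Q : GL (Fin m) F) {w : Fin m → F} (hw : w ≠ 0)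
    (hQw : tauQ Q (mk F w hw) ≠ mk F w hw) :
    LinearIndependent F ![(Q : Matrix (Fin m) (Fin m) F) *ᵥ w, w] := by
  rw [linearIndependent_fin2]
  refine ⟨by simpa using hw, fun a ha => hQw ?_⟩
  rw [tauQ_mk, mk_eq_mk_iff']
  exact ⟨a, by simpa using ha⟩

end tauQ

theorem tauQ_nonfixed_period_eq_scalar_order_GL2_general
    {F : Type*} [Field F]
    (Q : Matrix.GeneralLinearGroup (Fin 2) F) (ℓ : ℕ)
    (hℓ : IsLeast {n : ℕ | 0 < n ∧ ∃ α : Fˣ,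
      (Q : Matrix (Fin 2) (Fin 2) F) ^ n = (α : F) • (1 : Matrix (Fin 2) (Fin 2) F)} ℓ)
    (v : Projectivization F (Fin 2 → F)) (hv : tauQ Q v ≠ v) :
    IsLeast {n : ℕ | 0 < n ∧ (tauQ Q)^[n] v = v} ℓ := by
  obtain ⟨⟨hℓpos, α, hα⟩, hmin⟩ := hℓ
  induction v using Projectivization.ind with | h w hw => ?_
  simp only [iterate_tauQ, tauQ_mk_eq_self_iff _ hw, Units.val_pow_eq_pow_val]
  refine ⟨⟨hℓpos, α, by rw [hα, smul_mulVec, one_mulVec, Units.smul_def]⟩, ?_⟩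
  rintro n ⟨hn, a, ha⟩
  exact hmin ⟨hn, a, eq_smul_one_of_commute_of_mulVec_eq_smul ((Commute.refl _).pow_right n)
    (linearIndependent_of_tauQ_mk_ne Q hw hv) (by rwa [Units.smul_def] at ha)⟩

/-- **Forsyth–Gurev–Shrima.** Let `𝔽_q` be a finite field with `q` elements and
`Q ∈ GL_2(𝔽_q)`. Let `ℓ` be the least positive integer such that `Q^ℓ` is a scalar matrix
(`Q^ℓ = α·I` for some `α ∈ 𝔽_q^×`). Then every point `v ∈ ℙ^1(𝔽_q)` with `τ_Q(v) ≠ v` lies in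
an `ℓ`-cycle of `τ_Q`: the least positive integer `n` with `τ_Q^n(v) = v` equals `ℓ`. -/
theorem tauQ_nonfixed_period_eq_scalar_order_GL2
    {F : Type*} [Field F] [Fintype F]
    (Q : Matrix.GeneralLinearGroup (Fin 2) F) (ℓ : ℕ)
    (hℓ : IsLeast {n : ℕ | 0 < n ∧ ∃ α : Fˣ,
      (Q : Matrix (Fin 2) (Fin 2) F) ^ n = (α : F) • (1 : Matrix (Fin 2) (Fin 2) F)} ℓ)
    (v : Projectivization F (Fin 2 → F)) (hv : tauQ Q v ≠ v) :
    IsLeast {n : ℕ | 0 < n ∧ (tauQ Q)^[n] v = v} ℓ :=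
  tauQ_nonfixed_period_eq_scalar_order_GL2_general Q ℓ hℓ v hv
end

section
/- Let 𝔽_q be a finite field with q elements and Q ∈ GL_m(𝔽_q) a matrix that is diagonalizable over the algebraic closure 𝔽̄_q, with distinct eigenvalues λ_1, …, λ_s ∈ 𝔽̄_q^×. Let ℓ ≥ 1, and suppose that for all i ≠ j the element λ_i/λ_j has multiplicative order exactly ℓ in 𝔽̄_q^×. Then every point v ∈ ℙ^{m−1}(𝔽_q) with τ_Q(v) ≠ v lies in an ℓ-cycle of τ_Q: the least positive integer n with τ_Q^n(v) = v equals ℓ. -/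
open Matrix Projectivization
open scoped LinearAlgebra.Projectivization

theorem tauQ_eq_smul {F : Type*} [Field F] {m : ℕ} (Q : GL (Fin m) F) : tauQ Q = (Q • ·) :=
  funext fun v => v.ind fun _ _ => rfl

theorem Projectivization.smul_mk_eq_mk_iff {G K V : Type*} [AddCommGroup V] [DivisionRing K]
    [Module K V] [Group G] [DistribMulAction G V] [SMulCommClass G K V]
    (g : G) {v : V} (hv : v ≠ 0) : g • mk K v hv = mk K v hv ↔ ∃ a : K, g • v = a • v := by
  rw [smul_mk, mk_eq_mk_iff']
  exact exists_congr fun _ => eq_comm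

namespace Matrix

variable {ι : Type*} [Fintype ι]

theorem exists_mulVec_eq_smul_iff_map {F K : Type*} [Field F] [CommRing K] [Nontrivial K]
    (φ : F →+* K) (A : Matrix ι ι F) {x : ι → F} (hx : x ≠ 0) :
    (∃ c : F, A *ᵥ x = c • x) ↔ ∃ c : K, A.map φ *ᵥ (φ ∘ x) = c • (φ ∘ x) := by
  constructor
  · rintro ⟨c, hc⟩
    refine ⟨φ c, funext fun i => ?_⟩
    rw [← RingHom.map_mulVec, hc]
    simp
  · rintro ⟨c, hc⟩
    have hc' (i : ι) : φ ((A *ᵥ x) i) = c * φ (x i) := (φ.map_mulVec A x i).trans (congrFun hc i)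
    obtain ⟨k, hk⟩ := Function.ne_iff.mp hx
    have hφ : φ ((A *ᵥ x) k / x k) = c := by
      rw [div_eq_mul_inv, map_mul, hc', mul_assoc, ← map_mul, mul_inv_cancel₀ hk, map_one, mul_one]
    refine ⟨(A *ᵥ x) k / x k, funext fun i => φ.injective ?_⟩
    rw [hc', Pi.smul_apply, smul_eq_mul, map_mul, hφ]

variable [DecidableEq ι]

theorem diagonal_mulVec_eq_smul_iff {R : Type*} [CommRing R] [IsDomain R] (d y : ι → R) (c : R) :
    diagonal d *ᵥ y = c • y ↔ ∀ i, y i ≠ 0 → d i = c := by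
  simp only [funext_iff, mulVec_diagonal, Pi.smul_apply, smul_eq_mul]
  exact forall_congr' fun i => ⟨fun h hy => mul_right_cancel₀ hy h, fun h => by
    by_cases hy : y i = 0
    · simp [hy]
    · rw [h hy]⟩

theorem conj_mulVec_eq_smul_iff {R : Type*} [CommRing R] (P : (Matrix ι ι R)ˣ)
    (D : Matrix ι ι R) (z : ι → R) (c : R) :
    ((P : Matrix ι ι R) * D * (↑P⁻¹ : Matrix ι ι R)) *ᵥ z = c • z ↔
      D *ᵥ ((↑P⁻¹ : Matrix ι ι R) *ᵥ z) = c • ((↑P⁻¹ : Matrix ι ι R) *ᵥ z) := by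
  rw [← (mulVec_injective_of_isUnit P⁻¹.isUnit).eq_iff, mulVec_smul, mulVec_mulVec,
    ← mul_assoc, ← mul_assoc, Units.inv_mul, one_mul, ← mulVec_mulVec]

theorem exists_pow_mulVec_eq_smul_iff {F K : Type*} [Field F] [CommRing K] [IsDomain K]
    (φ : F →+* K) (A : Matrix ι ι F) (P : (Matrix ι ι K)ˣ) (d : ι → K)
    (hA : A.map φ = (P : Matrix ι ι K) * diagonal d * (↑P⁻¹ : Matrix ι ι K))
    {x : ι → F} (hx : x ≠ 0) (n : ℕ) :
    (∃ c : F, A ^ n *ᵥ x = c • x) ↔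
      ∃ c : K, ∀ i, ((↑P⁻¹ : Matrix ι ι K) *ᵥ (φ ∘ x)) i ≠ 0 → d i ^ n = c := by
  rw [exists_mulVec_eq_smul_iff_map φ _ hx, ← RingHom.mapMatrix_apply, map_pow,
    RingHom.mapMatrix_apply, hA, Units.conj_pow, diagonal_pow]
  simp only [conj_mulVec_eq_smul_iff, diagonal_mulVec_eq_smul_iff, Pi.pow_apply]

end Matrix

theorem iterate_tauQ_eq_self_iff {F K : Type*} [Field F] [CommRing K] [IsDomain K] {m : ℕ}
    (φ : F →+* K) (Q : GL (Fin m) F) (P : (Matrix (Fin m) (Fin m) K)ˣ) (d : Fin m → K)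
    (hQ : (Q : Matrix (Fin m) (Fin m) F).map φ =
      (P : Matrix (Fin m) (Fin m) K) * diagonal d * (↑P⁻¹ : Matrix (Fin m) (Fin m) K))
    (v : ℙ F (Fin m → F)) (n : ℕ) :
    (tauQ Q)^[n] v = v ↔
      ∃ c : K, ∀ i, ((↑P⁻¹ : Matrix (Fin m) (Fin m) K) *ᵥ (φ ∘ v.rep)) i ≠ 0 → d i ^ n = c := by
  rw [← exists_pow_mulVec_eq_smul_iff φ _ P d hQ v.rep_nonzero, tauQ_eq_smul, smul_iterate,
    ← v.mk_rep, smul_mk_eq_mk_iff, mk_rep, ← Units.val_pow_eq_pow_val]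
  rfl

theorem pow_eq_pow_iff_orderOf_div_dvd {G : Type*} [CommGroup G] {a b : G} {n : ℕ} :
    a ^ n = b ^ n ↔ orderOf (a / b) ∣ n := by
  rw [orderOf_dvd_iff_pow_eq_one, div_pow, div_eq_one]

theorem pow_eq_pow_iff_dvd_of_orderOf_div_eq {M ι κ : Type*} [CommMonoid M] {d : ι → M}
    {lam : κ → Mˣ} (hrange : Set.range (fun k => (lam k : M)) = Set.range d) {ℓ : ℕ}
    (hord : ∀ a b, a ≠ b → orderOf (lam a / lam b) = ℓ) {i j : ι} (hij : d i ≠ d j) (n : ℕ) :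
    d i ^ n = d j ^ n ↔ ℓ ∣ n := by
  obtain ⟨a, ha⟩ : d i ∈ Set.range fun k => (lam k : M) := hrange ▸ ⟨i, rfl⟩
  obtain ⟨b, hb⟩ : d j ∈ Set.range fun k => (lam k : M) := hrange ▸ ⟨j, rfl⟩
  have hab : a ≠ b := by rintro rfl; exact hij (ha.symm.trans hb)
  rw [← ha, ← hb, ← Units.val_pow_eq_pow_val, ← Units.val_pow_eq_pow_val, Units.val_inj,
    pow_eq_pow_iff_orderOf_div_dvd, hord a b hab]

theorem tauQ_nonfixed_period_eq_of_eigenvalue_ratios_order_general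
    {F : Type*} [Field F] {m : ℕ}
    (Q : Matrix.GeneralLinearGroup (Fin m) F)
    (P : (Matrix (Fin m) (Fin m) (AlgebraicClosure F))ˣ)
    (dvec : Fin m → AlgebraicClosure F)
    (hdiag : (Q : Matrix (Fin m) (Fin m) F).map (algebraMap F (AlgebraicClosure F)) =
      (P : Matrix (Fin m) (Fin m) (AlgebraicClosure F)) * Matrix.diagonal dvec *
        ((P⁻¹ : (Matrix (Fin m) (Fin m) (AlgebraicClosure F))ˣ) :
          Matrix (Fin m) (Fin m) (AlgebraicClosure F)))
    {s : ℕ} (lam : Fin s → (AlgebraicClosure F)ˣ)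
    (hrange : Set.range (fun i => (lam i : AlgebraicClosure F)) = Set.range dvec)
    (ℓ : ℕ) (hℓ : 1 ≤ ℓ)
    (hord : ∀ i j : Fin s, i ≠ j → orderOf (lam i / lam j) = ℓ)
    (v : Projectivization F (Fin m → F)) (hv : tauQ Q v ≠ v) :
    IsLeast {n : ℕ | 0 < n ∧ (tauQ Q)^[n] v = v} ℓ := by
  have hfix := iterate_tauQ_eq_self_iff _ Q P dvec hdiag v
  set y := (↑P⁻¹ : Matrix (Fin m) (Fin m) (AlgebraicClosure F)) *ᵥ
    (algebraMap F (AlgebraicClosure F) ∘ v.rep)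
  have hy : y ≠ 0 := by
    refine (mulVec_injective_of_isUnit P⁻¹.isUnit).ne_iff' (mulVec_zero _) |>.mpr ?_
    exact (RingHom.injective _).comp_left.ne_iff' (by ext; simp) |>.mpr v.rep_nonzero
  obtain ⟨i, hi⟩ := Function.ne_iff.mp hy
  obtain ⟨j, hj, hji⟩ : ∃ j, y j ≠ 0 ∧ dvec j ≠ dvec i := by
    by_contra! h
    exact hv ((hfix 1).2 ⟨dvec i, by simpa using h⟩)
  refine ⟨⟨hℓ, (hfix ℓ).2 ⟨dvec i ^ ℓ, fun k _ => ?_⟩⟩, fun n ⟨hn, hnv⟩ => ?_⟩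
  · by_cases hki : dvec k = dvec i
    · rw [hki]
    · exact (pow_eq_pow_iff_dvd_of_orderOf_div_eq hrange hord hki ℓ).2 dvd_rfl
  · obtain ⟨c, hc⟩ := (hfix n).1 hnv
    exact Nat.le_of_dvd hn <|
      (pow_eq_pow_iff_dvd_of_orderOf_div_eq hrange hord hji n).1 (by rw [hc j hj, hc i hi])

/-- Let `𝔽_q` be a finite field and `Q ∈ GL_m(𝔽_q)` diagonalizable over the
algebraic closure `K = 𝔽̄_q`: `Q = P D P⁻¹` with `D = diagonal dvec`, and with distinct
(nonzero) eigenvalues `λ_1, …, λ_s ∈ K^×` (so the set of values of `dvec` is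
`{λ_1, …, λ_s}`). Let `ℓ ≥ 1` and suppose that for all `i ≠ j` the element `λ_i/λ_j` has
multiplicative order exactly `ℓ` in `K^×`. Then every point `v ∈ ℙ^{m−1}(𝔽_q)` with
`τ_Q(v) ≠ v` lies in an `ℓ`-cycle of `τ_Q`: the least positive integer `n` with
`τ_Q^n(v) = v` equals `ℓ`. -/
theorem tauQ_nonfixed_period_eq_of_eigenvalue_ratios_order
    {F : Type*} [Field F] [Fintype F] {m : ℕ}
    (Q : Matrix.GeneralLinearGroup (Fin m) F)
    (P : (Matrix (Fin m) (Fin m) (AlgebraicClosure F))ˣ)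
    (dvec : Fin m → AlgebraicClosure F)
    (hdiag : (Q : Matrix (Fin m) (Fin m) F).map (algebraMap F (AlgebraicClosure F)) =
      (P : Matrix (Fin m) (Fin m) (AlgebraicClosure F)) * Matrix.diagonal dvec *
        ((P⁻¹ : (Matrix (Fin m) (Fin m) (AlgebraicClosure F))ˣ) :
          Matrix (Fin m) (Fin m) (AlgebraicClosure F)))
    {s : ℕ} (lam : Fin s → (AlgebraicClosure F)ˣ)
    (hlam : Function.Injective lam)
    (hrange : Set.range (fun i => (lam i : AlgebraicClosure F)) = Set.range dvec)
    (ℓ : ℕ) (hℓ : 1 ≤ ℓ)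
    (hord : ∀ i j : Fin s, i ≠ j → orderOf (lam i / lam j) = ℓ)
    (v : Projectivization F (Fin m → F)) (hv : tauQ Q v ≠ v) :
    IsLeast {n : ℕ | 0 < n ∧ (tauQ Q)^[n] v = v} ℓ :=
  tauQ_nonfixed_period_eq_of_eigenvalue_ratios_order_general Q P dvec hdiag lam hrange ℓ hℓ hord v
    hv
end

section
/- Let 𝔽_q be a finite field with q elements, K = 𝔽̄_q an algebraic closure, and Q ∈ GL_m(𝔽_q) a matrix that is diagonalizable over K, with distinct eigenvalues λ_1, …, λ_s ∈ K^×. Let ℓ ≥ 1, and suppose that every point v ∈ ℙ^{m−1}(K) with τ_Q(v) ≠ v satisfies that the least positive integer n with τ_Q^n(v) = v equals ℓ. Then for all i ≠ j, the element λ_i/λ_j has multiplicative order exactly ℓ in K^×. -/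
/-!
Write `Q = P D P⁻¹` with `D = diag(dvec)`, and pick indices `a ≠ b` with `dvec a = λ_i`,
`dvec b = λ_j`. The point `v = [P (e_a + e_b)]` satisfies `τ_Q^n v = [P (λ_i^n e_a + λ_j^n e_b)]`,
so `τ_Q^n v = v` exactly when `λ_i^n = λ_j^n`, i.e. when `(λ_i/λ_j)^n = 1`. In particular `v`
is not fixed, and its period `ℓ` is the order of `λ_i/λ_j`.
-/

open Matrix Projectivization

theorem orderOf_eq_of_isLeast {G : Type*} [Monoid G] {x : G} {ℓ : ℕ}
    (h : IsLeast {n : ℕ | 0 < n ∧ x ^ n = 1} ℓ) : orderOf x = ℓ :=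
  le_antisymm (orderOf_le_of_pow_eq_one h.1.1 h.1.2)
    (h.2 ⟨(isOfFinOrder_iff_pow_eq_one.mpr ⟨ℓ, h.1⟩).orderOf_pos, pow_orderOf_eq_one x⟩)

theorem exists_smul_eq_diagonal_mulVec_single_add_single_iff {ι R : Type*} [Fintype ι]
    [DecidableEq ι] [CommSemiring R] {d : ι → R} {a b : ι} (hab : a ≠ b) :
    (∃ c : R, c • (Pi.single a 1 + Pi.single b 1 : ι → R) =
      diagonal d *ᵥ (Pi.single a 1 + Pi.single b 1)) ↔ d a = d b := by
  simp only [funext_iff, mulVec_diagonal, Pi.smul_apply, Pi.add_apply, smul_eq_mul]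
  constructor
  · rintro ⟨c, hc⟩
    have hca := hc a
    have hcb := hc b
    simp [hab, hab.symm] at hca hcb
    rw [← hca, ← hcb]
  · intro hd
    refine ⟨d a, fun x => ?_⟩
    rcases eq_or_ne x a with rfl | hxa
    · rfl
    rcases eq_or_ne x b with rfl | hxb
    · simp [hd]
    · simp [hxa, hxb]

theorem single_add_single_ne_zero {ι R : Type*} [DecidableEq ι] [AddMonoidWithOne R]
    [NeZero (1 : R)] {a b : ι} (hab : a ≠ b) : (Pi.single a 1 + Pi.single b 1 : ι → R) ≠ 0 :=
  fun h => by simpa [hab.symm] using congrFun h a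

section tauQ

variable {K : Type*} [Field K] {m : ℕ}

theorem mulVec_units_ne_zero (P : (Matrix (Fin m) (Fin m) K)ˣ) {v : Fin m → K} (hv : v ≠ 0) :
    (P : Matrix (Fin m) (Fin m) K) *ᵥ v ≠ 0 := by
  simpa using (mulVec_injective_of_isUnit P.isUnit).ne hv

theorem tauQ_iterate_mk (Q : GL (Fin m) K) {v : Fin m → K} (hv : v ≠ 0) (n : ℕ) :
    (tauQ Q)^[n] (mk K v hv) =
      mk K (((Q ^ n : GL (Fin m) K) : Matrix (Fin m) (Fin m) K) *ᵥ v)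
        (mulVec_units_ne_zero (Q ^ n) hv) := by
  induction n with
  | zero => simp
  | succ n ih =>
    rw [Function.iterate_succ_apply', ih]
    refine (map_mk _ _ _ _).trans ?_
    congr 1
    rw [mulVecLin_apply, mulVec_mulVec, pow_succ', Units.val_mul]

theorem tauQ_iterate_mk_single_add_single_eq_self_iff (R : GL (Fin m) K)
    (P : (Matrix (Fin m) (Fin m) K)ˣ) {d : Fin m → K}
    (hR : (R : Matrix (Fin m) (Fin m) K) = P * diagonal d * (P⁻¹ : (Matrix (Fin m) (Fin m) K)ˣ))
    {a b : Fin m} (hab : a ≠ b) (n : ℕ) :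
    let v := mk K (↑P *ᵥ (Pi.single a 1 + Pi.single b 1))
      (mulVec_units_ne_zero P (single_add_single_ne_zero hab))
    (tauQ R)^[n] v = v ↔ d a ^ n = d b ^ n := by
  intro v
  have hRn : ((R ^ n : GL (Fin m) K) : Matrix (Fin m) (Fin m) K) =
      P * diagonal (d ^ n) * (P⁻¹ : (Matrix (Fin m) (Fin m) K)ˣ) := by
    rw [Units.val_pow_eq_pow_val, hR, Units.conj_pow, diagonal_pow]
  rw [tauQ_iterate_mk, mk_eq_mk_iff', hRn, mulVec_mulVec, mul_assoc, mul_assoc,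
    Units.inv_mul, mul_one, ← mulVec_mulVec]
  simp only [← mulVec_smul, (mulVec_injective_of_isUnit P.isUnit).eq_iff]
  exact exists_smul_eq_diagonal_mulVec_single_add_single_iff hab

end tauQ

theorem eigenvalue_ratios_order_of_tauQ_nonfixed_period_general
    {F : Type*} [Field F] {m : ℕ}
    (Q : Matrix.GeneralLinearGroup (Fin m) F)
    (P : (Matrix (Fin m) (Fin m) (AlgebraicClosure F))ˣ)
    (dvec : Fin m → AlgebraicClosure F)
    (hdiag : (Q : Matrix (Fin m) (Fin m) F).map (algebraMap F (AlgebraicClosure F)) =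
      (P : Matrix (Fin m) (Fin m) (AlgebraicClosure F)) * Matrix.diagonal dvec *
        ((P⁻¹ : (Matrix (Fin m) (Fin m) (AlgebraicClosure F))ˣ) :
          Matrix (Fin m) (Fin m) (AlgebraicClosure F)))
    {s : ℕ} (lam : Fin s → (AlgebraicClosure F)ˣ)
    (hlam : Function.Injective lam)
    (hrange : Set.range (fun i => (lam i : AlgebraicClosure F)) = Set.range dvec)
    (ℓ : ℕ)
    (hper : ∀ v : Projectivization (AlgebraicClosure F) (Fin m → AlgebraicClosure F),
      tauQ (Matrix.GeneralLinearGroup.map (algebraMap F (AlgebraicClosure F)) Q) v ≠ v →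
      IsLeast {n : ℕ | 0 < n ∧
        (tauQ (Matrix.GeneralLinearGroup.map (algebraMap F (AlgebraicClosure F)) Q))^[n] v = v}
        ℓ) :
    ∀ i j : Fin s, i ≠ j → orderOf (lam i / lam j) = ℓ := by
  intro i j hij
  obtain ⟨a, ha⟩ : (lam i : AlgebraicClosure F) ∈ Set.range dvec := hrange ▸ ⟨i, rfl⟩
  obtain ⟨b, hb⟩ : (lam j : AlgebraicClosure F) ∈ Set.range dvec := hrange ▸ ⟨j, rfl⟩
  have hab : a ≠ b := fun h => hij (hlam (Units.ext (by rw [← ha, ← hb, h])))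
  have hratio (n : ℕ) : dvec a ^ n = dvec b ^ n ↔ (lam i / lam j) ^ n = 1 := by
    rw [ha, hb, div_pow, div_eq_one, ← Units.val_pow_eq_pow_val, ← Units.val_pow_eq_pow_val,
      Units.val_inj]
  obtain ⟨v, hperiod⟩ : ∃ v, ∀ n,
      (tauQ (GeneralLinearGroup.map (algebraMap F _) Q))^[n] v = v ↔ (lam i / lam j) ^ n = 1 :=
    ⟨_, fun n =>
      (tauQ_iterate_mk_single_add_single_eq_self_iff _ P hdiag hab n).trans (hratio n)⟩
  have hmoved := hper v <| (hperiod 1).not.mpr fun h =>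
    hij (hlam (div_eq_one.mp (by simpa using h)))
  simp only [hperiod] at hmoved
  exact orderOf_eq_of_isLeast hmoved

/-- Let `𝔽_q` be a finite field, `K = 𝔽̄_q` an algebraic closure, and
`Q ∈ GL_m(𝔽_q)` diagonalizable over `K`: `Q = P D P⁻¹` with `D = diagonal dvec`, with
distinct (nonzero) eigenvalues `λ_1, …, λ_s ∈ K^×` (the set of values of `dvec` is
`{λ_1, …, λ_s}`). Let `ℓ ≥ 1`, and suppose that every point `v ∈ ℙ^{m−1}(K)` with
`τ_Q(v) ≠ v` satisfies that the least positive integer `n` with `τ_Q^n(v) = v` equals `ℓ`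
(where `Q` acts on `K^m` via `𝔽_q ⊆ K`). Then for all `i ≠ j`, the element `λ_i/λ_j` has
multiplicative order exactly `ℓ` in `K^×`. -/
theorem eigenvalue_ratios_order_of_tauQ_nonfixed_period
    {F : Type*} [Field F] [Fintype F] {m : ℕ}
    (Q : Matrix.GeneralLinearGroup (Fin m) F)
    (P : (Matrix (Fin m) (Fin m) (AlgebraicClosure F))ˣ)
    (dvec : Fin m → AlgebraicClosure F)
    (hdiag : (Q : Matrix (Fin m) (Fin m) F).map (algebraMap F (AlgebraicClosure F)) =
      (P : Matrix (Fin m) (Fin m) (AlgebraicClosure F)) * Matrix.diagonal dvec *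
        ((P⁻¹ : (Matrix (Fin m) (Fin m) (AlgebraicClosure F))ˣ) :
          Matrix (Fin m) (Fin m) (AlgebraicClosure F)))
    {s : ℕ} (lam : Fin s → (AlgebraicClosure F)ˣ)
    (hlam : Function.Injective lam)
    (hrange : Set.range (fun i => (lam i : AlgebraicClosure F)) = Set.range dvec)
    (ℓ : ℕ) (hℓ : 1 ≤ ℓ)
    (hper : ∀ v : Projectivization (AlgebraicClosure F) (Fin m → AlgebraicClosure F),
      tauQ (Matrix.GeneralLinearGroup.map (algebraMap F (AlgebraicClosure F)) Q) v ≠ v →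
      IsLeast {n : ℕ | 0 < n ∧
        (tauQ (Matrix.GeneralLinearGroup.map (algebraMap F (AlgebraicClosure F)) Q))^[n] v = v}
        ℓ) :
    ∀ i j : Fin s, i ≠ j → orderOf (lam i / lam j) = ℓ :=
  eigenvalue_ratios_order_of_tauQ_nonfixed_period_general Q P dvec hdiag lam hlam hrange ℓ hper
end
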